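/- arXiv:1902.00822 — 5 statements merged into one kernel-verified Lean document; each statement's English description precedes it below -/
import Mathlib

section
/- Let P be the transition matrix of a discrete-time Markov chain (X(i))_{i∈ℤ₊} on a discrete state space S, and let S̃ ⊆ S. For x ∈ S set N(x) := {y ∈ S : P(x,y) > 0}, and for f: S → ℝ let (P^k f)(x) := E_x[f(X(k))]. Suppose f is such that (P^i f)(x) exists for all x ∈ S and i ∈ ℤ₊, and that there are positive constants β and (α_i)_{i∈ℤ₊} such that, for all i ∈ ℤ₊: (1) |(P^i f)(x) − (P^i f)(y)| ≤ β for all x ∈ S̃ and y ∈ N(x); and (2) Σ_{y∈N(x)} P(x,y) ((P^i f)(x) − (P^i f)(y))² ≤ α_i for all x ∈ S̃. Set a_k := Σ_{i=0}^{k−1} α_i and let A_k be the event {X(i) ∈ S̃ for 0 ≤ i ≤ k−1}. Then for every x₀ ∈ S̃, every k ≥ 1 and every m ≥ 0: P_{x₀}({|f(X(k)) − (P^k f)(x₀)| ≥ m} ∩ A_k) ≤ 2·exp(−m² / (2a_k + 4βm/3)). -/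
open MeasureTheory

/-- A family of path-space measures `μ x` is the law of the discrete-time Markov chain with
transition matrix `P` started at `x`: each `μ x` is a probability measure, started at `x`,
and finite-dimensional cylinder probabilities satisfy the Markov recursion. -/
def IsMarkovChain {S : Type*} [MeasurableSpace S] (P : S → S → ℝ)
    (μ : S → Measure (ℕ → S)) : Prop :=
  (∀ x, IsProbabilityMeasure (μ x)) ∧
  (∀ x, μ x {ω | ω 0 = x} = 1) ∧
  (∀ (x : S) (n : ℕ) (path : ℕ → S),
    μ x {ω | ∀ i ≤ n + 1, ω i = path i}
      = μ x {ω | ∀ i ≤ n, ω i = path i} * ENNReal.ofReal (P (path n) (path (n + 1))))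

/-- `(P^k f)(x) = E_x [f(X(k))]`. -/
noncomputable def Pf {S : Type*} [MeasurableSpace S] (μ : S → Measure (ℕ → S))
    (f : S → ℝ) (k : ℕ) (x : S) : ℝ :=
  ∫ ω, f (ω k) ∂ μ x

/-!
Write `g n := P^n f`. For `x ∈ S̃` the increment `g n (X 1) - g (n + 1) x` has mean zero under
one step of the chain from `x` (Markov property), is bounded by `2β` on `N(x)` and has variance
at most `α n`, so Bernstein's bound on the moment generating function of a bounded centred
variable gives `E_x[exp (t (g n (X 1) - g (n + 1) x))] ≤ exp (α n t² / (2 (1 - 2βt/3)))`.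
Conditioning on the first step and inducting on `n`, the chain killed when it leaves `S̃` satisfies
`E_x[exp (t (f (X n) - g n x)); A_n] ≤ exp (a_n t² / (2 (1 - 2βt/3)))` for every `x`. Markov's
inequality with `t = m / (a_k + 2βm/3)` gives the one-sided bound; applying it also to `-f` gives
the factor `2`.
-/

open Finset
open scoped ENNReal

theorem Real.exp_le_quadratic_of_abs_le {u v : ℝ} (huv : |u| ≤ v) (hv : v < 3) :
    Real.exp u ≤ 1 + u + u ^ 2 / (2 * (1 - v / 3)) := by
  have hv0 : 0 ≤ v := (abs_nonneg u).trans huv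
  have hr : v / 3 < 1 := by linarith
  have hexp : HasSum (fun n => u ^ n / n.factorial) (Real.exp u) := by
    rw [Real.exp_eq_exp_ℝ]; exact NormedSpace.expSeries_div_hasSum_exp u
  have htail : HasSum (fun n => u ^ (n + 2) / (n + 2).factorial) (Real.exp u - (1 + u)) := by
    simpa [sum_range_succ] using (hasSum_nat_add_iff' 2).mpr hexp
  have hgeom : HasSum (fun n : ℕ => u ^ 2 / 2 * (v / 3) ^ n) (u ^ 2 / 2 * (1 - v / 3)⁻¹) :=
    (hasSum_geometric_of_lt_one (by positivity) hr).mul_left _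
  -- `(n + 2)! ≥ 2 * 3 ^ n` makes the tail of the exponential series geometric
  have hterm (n : ℕ) : u ^ (n + 2) / (n + 2).factorial ≤ u ^ 2 / 2 * (v / 3) ^ n := by
    have hfact : (2 * 3 ^ n : ℝ) ≤ (n + 2).factorial := by
      exact_mod_cast (Nat.factorial_mul_pow_le_factorial (m := 2) (n := n)).trans_eq
        (by rw [add_comm])
    have hpow : u ^ (n + 2) ≤ u ^ 2 * v ^ n :=
      calc u ^ (n + 2) ≤ |u| ^ (n + 2) := (le_abs_self _).trans_eq (abs_pow u _)
        _ = u ^ 2 * |u| ^ n := by rw [pow_add, sq_abs, mul_comm]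
        _ ≤ u ^ 2 * v ^ n := by gcongr
    calc u ^ (n + 2) / (n + 2).factorial ≤ u ^ 2 * v ^ n / (2 * 3 ^ n) :=
          div_le_div₀ (by positivity) hpow (by positivity) hfact
      _ = u ^ 2 / 2 * (v / 3) ^ n := by rw [div_pow]; ring
  have := hasSum_le hterm htail hgeom
  rw [div_mul_eq_div_div, div_eq_mul_inv (u ^ 2 / 2)]
  linarith

section DiscreteDistribution

variable {ι : Type*} {p D : ι → ℝ} {b : ℝ}

lemma abs_mul_le_mul_of_abs_le_of_pos {q d : ℝ} (hq : 0 ≤ q) (hd : 0 < q → |d| ≤ b) :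
    |q * d| ≤ q * b := by
  rcases hq.eq_or_lt with h | h
  · simp [← h]
  · rw [abs_mul, abs_of_pos h]
    exact mul_le_mul_of_nonneg_left (hd h) hq

lemma Summable.mul_of_abs_le_of_pos (hp : Summable p) (hp0 : ∀ i, 0 ≤ p i)
    (hD : ∀ i, 0 < p i → |D i| ≤ b) : Summable fun i => p i * D i :=
  .of_norm_bounded (hp.mul_right b) fun i => abs_mul_le_mul_of_abs_le_of_pos (hp0 i) (hD i)

lemma Summable.mul_sq_of_abs_le_of_pos (hp : Summable p) (hp0 : ∀ i, 0 ≤ p i)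
    (hD : ∀ i, 0 < p i → |D i| ≤ b) : Summable fun i => p i * D i ^ 2 :=
  hp.mul_of_abs_le_of_pos hp0 (b := b ^ 2) fun i hi => by
    rw [abs_pow]; exact pow_le_pow_left₀ (abs_nonneg _) (hD i hi) 2

theorem tsum_ofReal_mul_exp_le {σ t : ℝ} (hp0 : ∀ i, 0 ≤ p i) (hp1 : HasSum p 1)
    (hD : ∀ i, 0 < p i → |D i| ≤ b) (hmean : HasSum (fun i => p i * D i) 0)
    (hvar : ∑' i, p i * D i ^ 2 ≤ σ) (ht : 0 ≤ t) (hbt : b * t < 3) :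
    ∑' i, ENNReal.ofReal (p i * Real.exp (t * D i)) ≤
      ENNReal.ofReal (Real.exp (σ * (t ^ 2 / (2 * (1 - b * t / 3))))) := by
  set K := t ^ 2 / (2 * (1 - b * t / 3)) with hK
  have hK0 : 0 ≤ K := div_nonneg (sq_nonneg t) (by linarith)
  have hpD2 := hp1.summable.mul_sq_of_abs_le_of_pos hp0 hD
  have hpt (i : ι) : p i * Real.exp (t * D i) ≤ p i + t * (p i * D i) + K * (p i * D i ^ 2) := by
    rcases (hp0 i).eq_or_lt with h | h
    · simp [← h]
    · have habs : |t * D i| ≤ b * t := by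
        rw [abs_mul, abs_of_nonneg ht, mul_comm b]
        exact mul_le_mul_of_nonneg_left (hD i h) ht
      calc p i * Real.exp (t * D i)
          ≤ p i * (1 + t * D i + (t * D i) ^ 2 / (2 * (1 - b * t / 3))) :=
            mul_le_mul_of_nonneg_left (Real.exp_le_quadratic_of_abs_le habs hbt) (hp0 i)
        _ = p i + t * (p i * D i) + K * (p i * D i ^ 2) := by rw [hK]; ring
  have hsum : HasSum (fun i => p i + t * (p i * D i) + K * (p i * D i ^ 2))
      (1 + t * 0 + K * ∑' i, p i * D i ^ 2) :=
    (hp1.add (hmean.mul_left t)).add (hpD2.hasSum.mul_left K)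
  calc ∑' i, ENNReal.ofReal (p i * Real.exp (t * D i))
      ≤ ∑' i, ENNReal.ofReal (p i + t * (p i * D i) + K * (p i * D i ^ 2)) :=
        ENNReal.tsum_le_tsum fun i => ENNReal.ofReal_le_ofReal (hpt i)
    _ = ENNReal.ofReal (1 + t * 0 + K * ∑' i, p i * D i ^ 2) := by
        rw [← hsum.tsum_eq, ENNReal.ofReal_tsum_of_nonneg
          (fun i => (mul_nonneg (hp0 i) (Real.exp_pos _).le).trans (hpt i)) hsum.summable]
    _ ≤ ENNReal.ofReal (Real.exp (σ * K)) := by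
        refine ENNReal.ofReal_le_ofReal ?_
        nlinarith [Real.add_one_le_exp (σ * K), mul_le_mul_of_nonneg_left hvar hK0]

theorem tsum_ofReal_mul_exp_sub_le {Δ : ι → ℝ} {c β σ t : ℝ} (hp0 : ∀ i, 0 ≤ p i)
    (hp1 : HasSum p 1) (hΔ : ∀ i, 0 < p i → |Δ i| ≤ β) (hc : HasSum (fun i => p i * Δ i) c)
    (hvar : ∑' i, p i * Δ i ^ 2 ≤ σ) (ht : 0 ≤ t) (hβt : 2 * β * t < 3) :
    ∑' i, ENNReal.ofReal (p i * Real.exp (t * (Δ i - c))) ≤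
      ENNReal.ofReal (Real.exp (σ * (t ^ 2 / (2 * (1 - 2 * β * t / 3))))) := by
  have hcβ : |c| ≤ β := by
    have := tsum_of_norm_bounded (f := fun i => p i * Δ i) (hp1.mul_right β) fun i =>
      abs_mul_le_mul_of_abs_le_of_pos (hp0 i) (hΔ i)
    rwa [hc.tsum_eq, one_mul, Real.norm_eq_abs] at this
  have hpΔ2 := hp1.summable.mul_sq_of_abs_le_of_pos hp0 hΔ
  refine tsum_ofReal_mul_exp_le hp0 hp1 (fun i hi => ?_) ?_ ?_ ht hβt
  · calc |Δ i - c| ≤ |Δ i| + |c| := abs_sub _ _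
      _ ≤ 2 * β := by linarith [hΔ i hi]
  · simpa [mul_sub] using hc.sub (hp1.mul_right c)
  · have hvar' : HasSum (fun i => p i * (Δ i - c) ^ 2)
        (∑' i, p i * Δ i ^ 2 - 2 * c * c + c ^ 2 * 1) := by
      rw [show (fun i => p i * (Δ i - c) ^ 2) =
          fun i => p i * Δ i ^ 2 - 2 * c * (p i * Δ i) + c ^ 2 * p i from funext fun i => by ring]
      exact (hpΔ2.hasSum.sub (hc.mul_left (2 * c))).add (hp1.mul_left (c ^ 2))
    rw [hvar'.tsum_eq]
    nlinarith [sq_nonneg c]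

end DiscreteDistribution

section PathSpace

variable {S : Type*}

def pathInit (n : ℕ) (ω : ℕ → S) : Fin (n + 1) → S := fun i => ω i

lemma pathInit_surjective (n : ℕ) : Function.Surjective (pathInit (S := S) n) := fun q =>
  ⟨fun i => if h : i < n + 1 then q ⟨i, h⟩ else q 0, funext fun i => dif_pos i.isLt⟩

lemma pathInit_preimage_singleton (n : ℕ) (path : ℕ → S) :
    pathInit n ⁻¹' {pathInit n path} = {ω | ∀ i ≤ n, ω i = path i} := by
  ext ω
  simp [pathInit, funext_iff, Fin.forall_iff]

lemma measurable_pathInit [MeasurableSpace S] (n : ℕ) : Measurable (pathInit (S := S) n) :=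
  measurable_pi_lambda _ fun _ => measurable_pi_apply _

open scoped Classical in
noncomputable def killedExp (St : Set S) (t : ℝ) (n : ℕ) (g : S → ℝ) (q : Fin (n + 1) → S) :
    ℝ≥0∞ :=
  if ∀ i : Fin n, q i.castSucc ∈ St then ENNReal.ofReal (Real.exp (t * g (q (Fin.last n))))
  else 0

open scoped Classical in
lemma killedExp_cons (St : Set S) (t : ℝ) (n : ℕ) (g : S → ℝ) (x : S) (r : Fin (n + 1) → S) :
    killedExp St t (n + 1) g (Fin.cons x r) = if x ∈ St then killedExp St t n g r else 0 := by
  by_cases hx : x ∈ St <;> simp [killedExp, Fin.forall_fin_succ, hx]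

lemma killedExp_const_add (St : Set S) (t : ℝ) (n : ℕ) (g : S → ℝ) (a : ℝ)
    (q : Fin (n + 1) → S) :
    killedExp St t n (fun s => a + g s) q =
      ENNReal.ofReal (Real.exp (t * a)) * killedExp St t n g q := by
  unfold killedExp
  split_ifs
  · rw [mul_add, Real.exp_add, ENNReal.ofReal_mul (Real.exp_pos _).le]
  · rw [mul_zero]

end PathSpace

lemma Pf_neg {S : Type*} [MeasurableSpace S] (μ : S → Measure (ℕ → S)) (f : S → ℝ) (n : ℕ)
    (x : S) : Pf μ (fun s => -f s) n x = -Pf μ f n x :=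
  integral_neg _

namespace IsMarkovChain

open scoped Classical

variable {S : Type*} [MeasurableSpace S] {P : S → S → ℝ} {μ : S → Measure (ℕ → S)}

lemma ae_eval_zero [MeasurableSingletonClass S] (hμ : IsMarkovChain P μ) (x : S) :
    ∀ᵐ ω ∂μ x, ω 0 = x := by
  have := hμ.1 x
  rw [ae_iff]
  exact (prob_compl_eq_zero_iff (μ := μ x)
    (measurable_pi_apply 0 (measurableSet_singleton x))).mpr (hμ.2.1 x)

lemma measure_eval_zero [MeasurableSingletonClass S] (hμ : IsMarkovChain P μ) (x y : S) :
    μ x {ω | ω 0 = y} = if y = x then 1 else 0 := by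
  split_ifs with h
  · exact h ▸ hμ.2.1 x
  · exact measure_mono_null (fun ω hω hx => h (hω.symm.trans hx)) (ae_iff.mp (hμ.ae_eval_zero x))

lemma measure_cylinder [MeasurableSingletonClass S] (hμ : IsMarkovChain P μ) (x : S)
    (path : ℕ → S) (n : ℕ) :
    μ x {ω | ∀ i ≤ n, ω i = path i} = (if path 0 = x then 1 else 0) *
      ∏ i ∈ range n, ENNReal.ofReal (P (path i) (path (i + 1))) := by
  induction n with
  | zero => simpa using hμ.measure_eval_zero x (path 0)
  | succ n ih => rw [hμ.2.2, ih, prod_range_succ, mul_assoc]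

lemma map_pathInit_singleton [MeasurableSingletonClass S] (hμ : IsMarkovChain P μ) (x : S)
    (n : ℕ) (q : Fin (n + 1) → S) :
    (μ x).map (pathInit n) {q} =
      (if q 0 = x then 1 else 0) * ∏ i : Fin n, ENNReal.ofReal (P (q i.castSucc) (q i.succ)) := by
  obtain ⟨path, rfl⟩ := pathInit_surjective n q
  rw [Measure.map_apply (measurable_pathInit n) (measurableSet_singleton _),
    pathInit_preimage_singleton, hμ.measure_cylinder,
    ← Fin.prod_univ_eq_prod_range (fun i => ENNReal.ofReal (P (path i) (path (i + 1))))]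
  rfl

lemma Pf_zero [MeasurableSingletonClass S] (hμ : IsMarkovChain P μ) (f : S → ℝ) (x : S) :
    Pf μ f 0 x = f x := by
  have := hμ.1 x
  rw [Pf, integral_congr_ae ((hμ.ae_eval_zero x).mono fun ω hω => congrArg f hω)]
  simp

variable [MeasurableSingletonClass S] [Countable S]

lemma map_pathInit_succ (hμ : IsMarkovChain P μ) (x : S) (n : ℕ) :
    (μ x).map (pathInit (n + 1)) = Measure.sum fun y =>
      ENNReal.ofReal (P x y) • ((μ y).map (pathInit n)).map (Fin.cons (α := fun _ => S) x) := by
  refine Measure.ext_iff_singleton.mpr fun q => ?_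
  obtain ⟨a, r, rfl⟩ : ∃ a r, q = Fin.cons a r := ⟨q 0, Fin.tail q, (Fin.cons_self_tail q).symm⟩
  simp only [Measure.sum_apply _ (measurableSet_singleton _), Measure.smul_apply, smul_eq_mul,
    Measure.map_apply (measurable_of_countable (Fin.cons (α := fun _ => S) x))
      (measurableSet_singleton _)]
  by_cases ha : a = x
  · subst ha
    have hpre : Fin.cons (α := fun _ => S) a ⁻¹' {Fin.cons a r} = {r} := by
      ext r'; simp [Fin.cons_inj]
    simp only [hpre, hμ.map_pathInit_singleton, Fin.prod_univ_succ]
    rw [tsum_eq_single (r 0) fun y hy => by simp [Ne.symm hy]]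
    simp
  · have hpre : Fin.cons (α := fun _ => S) x ⁻¹' {Fin.cons a r} = ∅ := by
      ext r'; simp [Fin.cons_inj, Ne.symm ha]
    simp [hpre, hμ.map_pathInit_singleton, ha]

lemma lintegral_pathInit_succ (hμ : IsMarkovChain P μ) (x : S) (n : ℕ)
    (G : (Fin (n + 2) → S) → ℝ≥0∞) :
    ∫⁻ ω, G (pathInit (n + 1) ω) ∂μ x =
      ∑' y, ENNReal.ofReal (P x y) * ∫⁻ ω, G (Fin.cons x (pathInit n ω)) ∂μ y := by
  rw [← lintegral_map (measurable_of_countable G) (measurable_pathInit _), hμ.map_pathInit_succ,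
    lintegral_sum_measure]
  refine tsum_congr fun y => ?_
  rw [lintegral_smul_measure, lintegral_map (measurable_of_countable G) (measurable_of_countable _),
    lintegral_map (measurable_of_countable _) (measurable_pathInit n)]
  rfl

lemma Pf_eq_integral_map (f : S → ℝ) (n : ℕ) (x : S) :
    Pf μ f n x = ∫ q, f (q (Fin.last n)) ∂(μ x).map (pathInit n) :=
  (integral_map (f := fun q : Fin (n + 1) → S => f (q (Fin.last n)))
    (measurable_pathInit n).aemeasurable (measurable_of_countable _).aestronglyMeasurable).symm

lemma hasSum_Pf_succ (hμ : IsMarkovChain P μ) (hP0 : ∀ x y, 0 ≤ P x y) (f : S → ℝ)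
    (hint : ∀ x k, Integrable (fun ω => f (ω k)) (μ x)) (x : S) (n : ℕ) :
    HasSum (fun y => P x y * Pf μ f n y) (Pf μ f (n + 1) x) := by
  have hint' : Integrable (fun q : Fin (n + 2) → S => f (q (Fin.last (n + 1))))
      ((μ x).map (pathInit (n + 1))) :=
    (integrable_map_measure (measurable_of_countable _).aestronglyMeasurable
      (measurable_pathInit _).aemeasurable).mpr (hint x (n + 1))
  rw [hμ.map_pathInit_succ] at hint'
  rw [Pf_eq_integral_map, hμ.map_pathInit_succ]
  refine (hasSum_integral_measure hint').congr_fun fun y => ?_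
  rw [integral_smul_measure, integral_map (measurable_of_countable _).aemeasurable
    (measurable_of_countable _).aestronglyMeasurable, ENNReal.toReal_ofReal (hP0 x y), smul_eq_mul,
    Pf_eq_integral_map]
  simp

lemma tsum_ofReal_mul_exp_Pf_sub_le (hμ : IsMarkovChain P μ) (hP0 : ∀ x y, 0 ≤ P x y)
    (hProw : ∀ x, HasSum (P x) 1) {f : S → ℝ}
    (hint : ∀ x k, Integrable (fun ω => f (ω k)) (μ x)) {x : S} {n : ℕ} {β σ t : ℝ}
    (h1 : ∀ y, 0 < P x y → |Pf μ f n x - Pf μ f n y| ≤ β)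
    (h2 : ∑' y, P x y * (Pf μ f n x - Pf μ f n y) ^ 2 ≤ σ) (ht : 0 ≤ t) (hβt : 2 * β * t < 3) :
    ∑' y, ENNReal.ofReal (P x y * Real.exp (t * (Pf μ f n y - Pf μ f (n + 1) x))) ≤
      ENNReal.ofReal (Real.exp (σ * (t ^ 2 / (2 * (1 - 2 * β * t / 3))))) := by
  have hmean : HasSum (fun y => P x y * (Pf μ f n y - Pf μ f n x))
      (Pf μ f (n + 1) x - Pf μ f n x) := by
    simpa [mul_sub] using (hμ.hasSum_Pf_succ hP0 f hint x n).sub ((hProw x).mul_right (Pf μ f n x))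
  have key := tsum_ofReal_mul_exp_sub_le (hP0 x) (hProw x) (fun y hy => by
      rw [abs_sub_comm]; exact h1 y hy) hmean (by simpa only [sub_sq_comm] using h2) ht hβt
  simpa only [sub_sub_sub_cancel_right] using key

theorem lintegral_killedExp_le (hμ : IsMarkovChain P μ) (hP0 : ∀ x y, 0 ≤ P x y)
    (hProw : ∀ x, HasSum (P x) 1) (St : Set S) {f : S → ℝ}
    (hint : ∀ x k, Integrable (fun ω => f (ω k)) (μ x)) {β : ℝ} {α : ℕ → ℝ}
    (h1 : ∀ (i : ℕ), ∀ x ∈ St, ∀ y, 0 < P x y → |Pf μ f i x - Pf μ f i y| ≤ β)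
    (h2 : ∀ (i : ℕ), ∀ x ∈ St, ∑' y, P x y * (Pf μ f i x - Pf μ f i y) ^ 2 ≤ α i)
    {t : ℝ} (ht : 0 ≤ t) (hβt : 2 * β * t < 3) (n : ℕ) (x : S) :
    ∫⁻ ω, killedExp St t n (fun s => f s - Pf μ f n x) (pathInit n ω) ∂μ x ≤
      ENNReal.ofReal (Real.exp (t ^ 2 / (2 * (1 - 2 * β * t / 3)) * ∑ j ∈ range n, α j)) := by
  set K := t ^ 2 / (2 * (1 - 2 * β * t / 3))
  induction n generalizing x with
  | zero =>
    have := hμ.1 x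
    have hone : ∀ᵐ ω ∂μ x, killedExp St t 0 (fun s => f s - Pf μ f 0 x) (pathInit 0 ω) = 1 :=
      (hμ.ae_eval_zero x).mono fun ω hω => by simp [killedExp, pathInit, hω, hμ.Pf_zero]
    simp [lintegral_congr_ae hone]
  | succ n ih =>
    rw [hμ.lintegral_pathInit_succ]
    simp only [killedExp_cons]
    split_ifs with hx
    case neg => simp
    -- re-centre the remaining `n` steps at `(P^n f)(y)`
    have hshift (y : S) (ω : ℕ → S) :
        killedExp St t n (fun s => f s - Pf μ f (n + 1) x) (pathInit n ω) =
          ENNReal.ofReal (Real.exp (t * (Pf μ f n y - Pf μ f (n + 1) x))) *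
            killedExp St t n (fun s => f s - Pf μ f n y) (pathInit n ω) := by
      rw [← killedExp_const_add]; congr; funext s; ring
    calc ∑' y, ENNReal.ofReal (P x y) *
          ∫⁻ ω, killedExp St t n (fun s => f s - Pf μ f (n + 1) x) (pathInit n ω) ∂μ y
        = ∑' y, ENNReal.ofReal (P x y * Real.exp (t * (Pf μ f n y - Pf μ f (n + 1) x))) *
          ∫⁻ ω, killedExp St t n (fun s => f s - Pf μ f n y) (pathInit n ω) ∂μ y := by
          refine tsum_congr fun y => ?_
          rw [lintegral_congr (hshift y), lintegral_const_mul' _ _ ENNReal.ofReal_ne_top,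
            ENNReal.ofReal_mul (hP0 x y), mul_assoc]
      _ ≤ ∑' y, ENNReal.ofReal (P x y * Real.exp (t * (Pf μ f n y - Pf μ f (n + 1) x))) *
          ENNReal.ofReal (Real.exp (K * ∑ j ∈ range n, α j)) :=
          ENNReal.tsum_le_tsum fun y => mul_le_mul_right (ih y) _
      _ ≤ ENNReal.ofReal (Real.exp (α n * K)) *
          ENNReal.ofReal (Real.exp (K * ∑ j ∈ range n, α j)) := by
          rw [ENNReal.tsum_mul_right]
          exact mul_le_mul_left (hμ.tsum_ofReal_mul_exp_Pf_sub_le hP0 hProw hint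
            (h1 n x hx) (h2 n x hx) ht hβt) _
      _ = ENNReal.ofReal (Real.exp (K * ∑ j ∈ range (n + 1), α j)) := by
          rw [← ENNReal.ofReal_mul (Real.exp_pos _).le, ← Real.exp_add, sum_range_succ]
          ring_nf

theorem measure_le_sub_Pf_inter_le (hμ : IsMarkovChain P μ) (hP0 : ∀ x y, 0 ≤ P x y)
    (hProw : ∀ x, HasSum (P x) 1) (St : Set S) {f : S → ℝ}
    (hint : ∀ x k, Integrable (fun ω => f (ω k)) (μ x)) {β : ℝ} (hβ : 0 < β) {α : ℕ → ℝ}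
    (hα : ∀ i, 0 < α i)
    (h1 : ∀ (i : ℕ), ∀ x ∈ St, ∀ y, 0 < P x y → |Pf μ f i x - Pf μ f i y| ≤ β)
    (h2 : ∀ (i : ℕ), ∀ x ∈ St, ∑' y, P x y * (Pf μ f i x - Pf μ f i y) ^ 2 ≤ α i)
    (x₀ : S) {k : ℕ} (hk : 1 ≤ k) {m : ℝ} (hm : 0 ≤ m) :
    μ x₀ ({ω | m ≤ f (ω k) - Pf μ f k x₀} ∩ {ω | ∀ i < k, ω i ∈ St}) ≤
      ENNReal.ofReal (Real.exp (-(m ^ 2) / (2 * (∑ i ∈ range k, α i) + 4 * β * m / 3))) := by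
  set a := ∑ i ∈ range k, α i
  have ha : 0 < a := sum_pos (fun i _ => hα i) (nonempty_range_iff.mpr (by omega))
  have hd : 0 < a + 2 * β * m / 3 := by positivity
  -- the optimal Chernoff parameter
  set t := m / (a + 2 * β * m / 3) with ht_def
  have ht : 0 ≤ t := by positivity
  have hβt : 2 * β * t < 3 := by
    rw [← mul_div_assoc, div_lt_iff₀ hd]; linarith
  have hexponent : -(t * m) + t ^ 2 / (2 * (1 - 2 * β * t / 3)) * a =
      -(m ^ 2) / (2 * a + 4 * β * m / 3) := by
    rw [ht_def]; field_simp; ring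
  set G := killedExp St t k (fun s => f s - Pf μ f k x₀)
  have hsub : {ω | m ≤ f (ω k) - Pf μ f k x₀} ∩ {ω | ∀ i < k, ω i ∈ St} ⊆
      {ω | ENNReal.ofReal (Real.exp (t * m)) ≤ G (pathInit k ω)} := by
    rintro ω ⟨hmω, hstay⟩
    show _ ≤ killedExp _ _ _ _ _
    rw [killedExp, if_pos (show ∀ i : Fin k, pathInit k ω i.castSucc ∈ St from
      fun i => hstay i i.isLt)]
    exact ENNReal.ofReal_le_ofReal (Real.exp_le_exp.mpr (mul_le_mul_of_nonneg_left hmω ht))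
  have hchernoff := (mul_meas_ge_le_lintegral₀
    ((measurable_of_countable G).comp (measurable_pathInit k)).aemeasurable
    (ENNReal.ofReal (Real.exp (t * m)))).trans
    (hμ.lintegral_killedExp_le hP0 hProw St hint h1 h2 ht hβt k x₀)
  calc μ x₀ ({ω | m ≤ f (ω k) - Pf μ f k x₀} ∩ {ω | ∀ i < k, ω i ∈ St})
      = ENNReal.ofReal (Real.exp (-(t * m))) * (ENNReal.ofReal (Real.exp (t * m)) *
          μ x₀ ({ω | m ≤ f (ω k) - Pf μ f k x₀} ∩ {ω | ∀ i < k, ω i ∈ St})) := by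
        rw [← mul_assoc, ← ENNReal.ofReal_mul (Real.exp_pos _).le, ← Real.exp_add,
          neg_add_cancel, Real.exp_zero, ENNReal.ofReal_one, one_mul]
    _ ≤ ENNReal.ofReal (Real.exp (-(t * m))) *
          ENNReal.ofReal (Real.exp (t ^ 2 / (2 * (1 - 2 * β * t / 3)) * a)) :=
        mul_le_mul_right ((mul_le_mul_right (measure_mono hsub) _).trans hchernoff) _
    _ = ENNReal.ofReal (Real.exp (-(m ^ 2) / (2 * a + 4 * β * m / 3))) := by
        rw [← ENNReal.ofReal_mul (Real.exp_pos _).le, ← Real.exp_add, hexponent]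

end IsMarkovChain

theorem stmt0_general {S : Type*} [MeasurableSpace S] [MeasurableSingletonClass S] [Countable S]
    (P : S → S → ℝ) (hPnonneg : ∀ x y, 0 ≤ P x y) (hProw : ∀ x, HasSum (P x) 1)
    (μ : S → Measure (ℕ → S)) (hμ : IsMarkovChain P μ)
    (St : Set S) (f : S → ℝ)
    (hint : ∀ x k, Integrable (fun ω => f (ω k)) (μ x))
    (β : ℝ) (hβ : 0 < β) (α : ℕ → ℝ) (hα : ∀ i, 0 < α i)
    (h1 : ∀ (i : ℕ), ∀ x ∈ St, ∀ y, 0 < P x y → |Pf μ f i x - Pf μ f i y| ≤ β)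
    (h2 : ∀ (i : ℕ), ∀ x ∈ St, ∑' y, P x y * (Pf μ f i x - Pf μ f i y) ^ 2 ≤ α i)
    (x₀ : S) (k : ℕ) (hk : 1 ≤ k) (m : ℝ) (hm : 0 ≤ m) :
    μ x₀ ({ω | m ≤ |f (ω k) - Pf μ f k x₀|} ∩ {ω | ∀ i < k, ω i ∈ St})
      ≤ ENNReal.ofReal
          (2 * Real.exp (-(m ^ 2) / (2 * (∑ i ∈ Finset.range k, α i) + 4 * β * m / 3))) := by
  have hup := hμ.measure_le_sub_Pf_inter_le hPnonneg hProw St hint hβ hα h1 h2 x₀ hk hm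
  have hdown := hμ.measure_le_sub_Pf_inter_le hPnonneg hProw St (f := fun s => -f s)
    (fun x k => (hint x k).neg) hβ hα
    (fun i x hx y hy => by simpa only [Pf_neg, neg_sub_neg, abs_sub_comm] using h1 i x hx y hy)
    (fun i x hx => by simpa only [Pf_neg, neg_sub_neg, sub_sq_comm] using h2 i x hx) x₀ hk hm
  simp only [Pf_neg, neg_sub_neg] at hdown
  calc μ x₀ ({ω | m ≤ |f (ω k) - Pf μ f k x₀|} ∩ {ω | ∀ i < k, ω i ∈ St})
      ≤ μ x₀ (({ω | m ≤ f (ω k) - Pf μ f k x₀} ∩ {ω | ∀ i < k, ω i ∈ St}) ∪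
          ({ω | m ≤ Pf μ f k x₀ - f (ω k)} ∩ {ω | ∀ i < k, ω i ∈ St})) := by
        refine measure_mono fun ω ⟨hω, hstay⟩ => ?_
        rcases le_abs'.mp (show m ≤ |f (ω k) - Pf μ f k x₀| from hω) with h | h
        · exact Or.inr ⟨show m ≤ Pf μ f k x₀ - f (ω k) by linarith, hstay⟩
        · exact Or.inl ⟨h, hstay⟩
    _ ≤ _ := (measure_union_le _ _).trans (add_le_add hup hdown)
    _ = _ := by rw [← ENNReal.ofReal_add (Real.exp_pos _).le (Real.exp_pos _).le, ← two_mul]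

theorem stmt0 {S : Type*} [MeasurableSpace S] [MeasurableSingletonClass S] [Countable S]
    (P : S → S → ℝ) (hPnonneg : ∀ x y, 0 ≤ P x y) (hProw : ∀ x, HasSum (P x) 1)
    (μ : S → Measure (ℕ → S)) (hμ : IsMarkovChain P μ)
    (St : Set S) (f : S → ℝ)
    (hint : ∀ x k, Integrable (fun ω => f (ω k)) (μ x))
    (β : ℝ) (hβ : 0 < β) (α : ℕ → ℝ) (hα : ∀ i, 0 < α i)
    (h1 : ∀ (i : ℕ), ∀ x ∈ St, ∀ y, 0 < P x y → |Pf μ f i x - Pf μ f i y| ≤ β)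
    (h2 : ∀ (i : ℕ), ∀ x ∈ St, ∑' y, P x y * (Pf μ f i x - Pf μ f i y) ^ 2 ≤ α i)
    (x₀ : S) (hx₀ : x₀ ∈ St) (k : ℕ) (hk : 1 ≤ k) (m : ℝ) (hm : 0 ≤ m) :
    μ x₀ ({ω | m ≤ |f (ω k) - Pf μ f k x₀|} ∩ {ω | ∀ i < k, ω i ∈ St})
      ≤ ENNReal.ofReal
          (2 * Real.exp (-(m ^ 2) / (2 * (∑ i ∈ Finset.range k, α i) + 4 * β * m / 3))) :=
  stmt0_general P hPnonneg hProw μ hμ St f hint β hβ α hα h1 h2 x₀ k hk m hm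
end

section
/- Let (Ω, ℱ, P) be a probability space with a filtration {∅,Ω} = ℱ₀ ⊆ ℱ₁ ⊆ ⋯ ⊆ ℱ_k, let Z be a square-integrable ℱ_k-measurable random variable with E Z = μ, and set Z_i := E(Z | ℱ_i) for i = 0,…,k. For δ, γ ≥ 0 define the event A(δ,γ) := {Σ_{i=1}^k Var(Z_i | ℱ_{i−1}) ≤ δ} ∩ {|Z_i − Z_{i−1}| ≤ γ for all 1 ≤ i ≤ k}. Then for any m ≥ 0 and any δ, γ ≥ 0: P({|Z − μ| ≥ m} ∩ A(δ,γ)) ≤ 2·exp(−m² / (2δ + 2γm/3)). In particular, if Σ_{i=1}^k Var(Z_i | ℱ_{i−1}) ≤ δ a.s. and |Z_i − Z_{i−1}| ≤ γ a.s. for all i, then P(|Z − μ| ≥ m) ≤ 2·exp(−m² / (2δ + 2γm/3)). -/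
/-!
Write `D i = X i - X (i - 1)` for the increments and `V i` for their conditional variances.
For `0 ≤ L` with `L γ < 3`, Bernstein's bound `exp u ≤ 1 + u + 3 / (2 (3 - L γ)) u²` for
`u ≤ L γ`, together with `E[D i | ℱ (i - 1)] = 0`, gives
`E[exp (L min (D i) γ - c V i) | ℱ (i - 1)] ≤ 1` with `c = 3 L² / (2 (3 - L γ))`, so the product of
these factors is a supermartingale of mean at most `1`. On the event where `X n - X 0 ≥ m`,
`∑ V i ≤ δ` and every `D i ≤ γ`, the product is at least `exp (L m - c δ)`, and Markov's
inequality with the optimal `L = 3 m / (3 δ + γ m)` gives `exp (-m² / (2 δ + 2 γ m / 3))`.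
Applying this to `X` and `-X` gives the two-sided bound for `δ > 0`, and `δ = 0` follows by
letting `δ` decrease to `0`.
-/

open MeasureTheory ProbabilityTheory Real Filter Topology

namespace Real

theorem two_mul_three_sub_mul_exp_sub_one_sub_le (u : ℝ) :
    2 * (3 - u) * (exp u - 1 - u) ≤ 3 * u ^ 2 := by
  -- `F` is convex, since `F'' x = 2 exp x (exp (-x) - (1 - x)) ≥ 0`, and `F 0 = F' 0 = 0`.
  let F : ℝ → ℝ := fun u => 3 * u ^ 2 - 2 * (3 - u) * (exp u - 1 - u)
  let F' : ℝ → ℝ := fun u => 2 * (u + 2 - 2 * exp u + u * exp u)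
  have hF : ∀ x, HasDerivAt F (F' x) x := by
    intro x
    have h : HasDerivAt F (3 * (↑2 * x ^ 1) - (2 * (0 - 1) * (exp x - 1 - x)
        + 2 * (3 - x) * (exp x - 1))) x :=
      ((hasDerivAt_pow 2 x).const_mul 3).sub
        ((((hasDerivAt_const x 3).sub (hasDerivAt_id' x)).const_mul 2).mul
          (((hasDerivAt_exp x).sub_const 1).sub (hasDerivAt_id' x)))
    exact h.congr_deriv (by ring)
  have hF' : ∀ x, HasDerivAt F' (2 * (1 - exp x + x * exp x)) x := by
    intro x
    have h : HasDerivAt F' (2 * (1 - 2 * exp x + (1 * exp x + x * exp x))) x :=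
      ((((hasDerivAt_id' x).add_const 2).sub ((hasDerivAt_exp x).const_mul 2)).add
        ((hasDerivAt_id' x).mul (hasDerivAt_exp x))).const_mul 2
    exact h.congr_deriv (by ring)
  have hF'' : ∀ x, 0 ≤ 2 * (1 - exp x + x * exp x) := by
    intro x
    have h := add_one_le_exp (-x)
    have h1 : exp x * exp (-x) = 1 := by rw [← exp_add, add_neg_cancel, exp_zero]
    nlinarith [exp_pos x]
  have hconv : ConvexOn ℝ Set.univ F :=
    convexOn_of_hasDerivWithinAt2_nonneg convex_univ
      (fun x _ => (hF x).continuousAt.continuousWithinAt)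
      (fun x _ => (hF x).hasDerivWithinAt) (fun x _ => (hF' x).hasDerivWithinAt)
      (fun x _ => hF'' x)
  have hmin : IsMinOn F Set.univ 0 := by
    refine hconv.isMinOn_of_rightDeriv_eq_zero (by simp) ?_
    rw [(hF 0).hasDerivWithinAt.derivWithin (uniqueDiffWithinAt_Ioi 0)]
    simp [F']
  have h : F 0 ≤ F u := hmin (Set.mem_univ u)
  simp only [F, exp_zero] at h
  linarith

theorem exp_le_one_add_add_mul_sq {a u : ℝ} (ha : a < 3) (hu : u ≤ a) :
    exp u ≤ 1 + u + 3 / (2 * (3 - a)) * u ^ 2 := by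
  have h3u : 0 < 2 * (3 - u) := by linarith
  have hcoef : 3 / (2 * (3 - u)) ≤ 3 / (2 * (3 - a)) :=
    div_le_div_of_nonneg_left (by norm_num) (by linarith) (by linarith)
  have hbern : exp u - 1 - u ≤ 3 / (2 * (3 - u)) * u ^ 2 := by
    rw [div_mul_eq_mul_div, le_div_iff₀ h3u]
    linarith [two_mul_three_sub_mul_exp_sub_one_sub_le u]
  linarith [mul_le_mul_of_nonneg_right hcoef (sq_nonneg u)]

theorem exp_mul_min_le {L γ : ℝ} (hL : 0 ≤ L) (hγ : 0 ≤ γ) (hLγ : L * γ < 3) (x : ℝ) :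
    exp (L * min x γ) ≤ 1 + L * x + 3 / (2 * (3 - L * γ)) * L ^ 2 * x ^ 2 := by
  have hcoef : 0 ≤ 3 / (2 * (3 - L * γ)) := div_nonneg (by norm_num) (by linarith)
  have hmin : L * min x γ ≤ L * γ := mul_le_mul_of_nonneg_left (min_le_right x γ) hL
  calc exp (L * min x γ)
      ≤ 1 + L * min x γ + 3 / (2 * (3 - L * γ)) * (L * min x γ) ^ 2 :=
        exp_le_one_add_add_mul_sq hLγ hmin
    _ ≤ 1 + L * x + 3 / (2 * (3 - L * γ)) * L ^ 2 * x ^ 2 := by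
        rcases le_total x γ with h | h
        · rw [min_eq_left h]
          exact le_of_eq (by ring)
        · rw [min_eq_right h]
          have e1 : L * γ ≤ L * x := mul_le_mul_of_nonneg_left h hL
          have e2 : γ ^ 2 ≤ x ^ 2 := pow_le_pow_left₀ hγ h 2
          nlinarith [mul_le_mul_of_nonneg_left e2 (mul_nonneg hcoef (sq_nonneg L))]

theorem exists_mul_sub_mul_sq_eq {m δ γ : ℝ} (hm : 0 ≤ m) (hδ : 0 < δ) (hγ : 0 ≤ γ) :
    ∃ L, 0 ≤ L ∧ L * γ < 3 ∧
      L * m - 3 / (2 * (3 - L * γ)) * L ^ 2 * δ = m ^ 2 / (2 * δ + 2 * γ * m / 3) := by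
  have hden : 0 < 3 * δ + γ * m := by positivity
  refine ⟨3 * m / (3 * δ + γ * m), by positivity, ?_, ?_⟩
  · rw [div_mul_eq_mul_div, div_lt_iff₀ hden]
    nlinarith
  · have h3 : 3 - 3 * m / (3 * δ + γ * m) * γ = 9 * δ / (3 * δ + γ * m) := by
      field_simp
      ring
    rw [h3]
    field_simp
    ring

end Real

theorem Finset.sum_Icc_sub_pred {M : Type*} [AddCommGroup M] (f : ℕ → M) (n : ℕ) :
    ∑ i ∈ Finset.Icc 1 n, (f i - f (i - 1)) = f n - f 0 := by
  induction n with
  | zero => simp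
  | succ n ih =>
    rw [Finset.sum_Icc_succ_top (Nat.le_add_left 1 n), ih, Nat.add_sub_cancel]
    abel

theorem le_ofReal_two_mul_exp_of_forall_gt {p : ENNReal} (hp : p ≤ 1) {m δ γ : ℝ}
    (h : ∀ δ' > δ, p ≤ ENNReal.ofReal (2 * exp (-(m ^ 2) / (2 * δ' + 2 * γ * m / 3)))) :
    p ≤ ENNReal.ofReal (2 * exp (-(m ^ 2) / (2 * δ + 2 * γ * m / 3))) := by
  by_cases h0 : 2 * δ + 2 * γ * m / 3 = 0
  · -- division by zero makes the exponent `0`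
    rw [h0, div_zero, exp_zero, mul_one]
    exact hp.trans (by norm_num)
  · have hev : ∀ᶠ δ' in 𝓝[>] δ,
        p ≤ ENNReal.ofReal (2 * exp (-(m ^ 2) / (2 * δ' + 2 * γ * m / 3))) :=
      eventually_nhdsWithin_of_forall h
    refine ge_of_tendsto (tendsto_nhdsWithin_of_tendsto_nhds ?_) hev
    have : ContinuousAt (fun δ' => 2 * exp (-(m ^ 2) / (2 * δ' + 2 * γ * m / 3))) δ := by
      fun_prop (disch := exact h0)
    exact (ENNReal.continuous_ofReal.tendsto _).comp this.tendsto

section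

variable {Ω : Type*} {m0 : MeasurableSpace Ω} {P : Measure Ω}

theorem integrable_exp_mul_min [IsFiniteMeasure P] {D : Ω → ℝ} {L γ c : ℝ}
    (hquad : ∀ x, exp (L * min x γ) ≤ 1 + L * x + c * x ^ 2) (hD : MemLp D 2 P) :
    Integrable (fun ω => exp (L * min (D ω) γ)) P := by
  refine (((integrable_const 1).add ((hD.integrable one_le_two).const_mul L)).add
    (hD.integrable_sq.const_mul c)).mono' ((by fun_prop : Continuous fun x => exp (L * min x γ))
      |>.comp_aestronglyMeasurable hD.1) (Eventually.of_forall fun ω => ?_)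
  rw [norm_of_nonneg (exp_pos _).le]
  exact hquad (D ω)

theorem condExp_exp_mul_min_le [IsFiniteMeasure P] {G : MeasurableSpace Ω} (hG : G ≤ m0)
    {D V : Ω → ℝ} {L γ c : ℝ} (hc : 0 ≤ c)
    (hquad : ∀ x, exp (L * min x γ) ≤ 1 + L * x + c * x ^ 2)
    (hD : MemLp D 2 P) (hD0 : P[D | G] =ᵐ[P] 0) (hV : P[D ^ 2 | G] ≤ᵐ[P] V) :
    P[fun ω => exp (L * min (D ω) γ) | G] ≤ᵐ[P] fun ω => 1 + c * V ω := by
  set ψ : Ω → ℝ := (fun _ => 1) + L • D + c • D ^ 2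
  have hD_int : Integrable D P := hD.integrable one_le_two
  have hD2_int : Integrable (D ^ 2) P := hD.integrable_sq
  have hψ_int : Integrable ψ P :=
    ((integrable_const 1).add (hD_int.smul L)).add (hD2_int.smul c)
  have hψ_cond : P[ψ | G] =ᵐ[P] fun ω => 1 + L * P[D | G] ω + c * P[D ^ 2 | G] ω := by
    filter_upwards [condExp_add ((integrable_const 1).add (hD_int.smul L)) (hD2_int.smul c) G,
      condExp_add (integrable_const (1 : ℝ)) (hD_int.smul L) G,
      condExp_smul L D G, condExp_smul c (D ^ 2) G] with ω h1 h2 h3 h4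
    rw [h1, Pi.add_apply, h2, Pi.add_apply, h3, h4, condExp_const hG]
    rfl
  filter_upwards [condExp_mono (integrable_exp_mul_min hquad hD) hψ_int
      (Eventually.of_forall fun ω => hquad (D ω)), hψ_cond, hD0, hV] with ω h1 h2 h3 h4
  rw [h2, h3, Pi.zero_apply, mul_zero, add_zero] at h1
  linarith [mul_le_mul_of_nonneg_left h4 hc]

theorem condExp_exp_mul_min_sub_le_one [IsFiniteMeasure P] {G : MeasurableSpace Ω} (hG : G ≤ m0)
    {D V : Ω → ℝ} {L γ c : ℝ} (hc : 0 ≤ c)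
    (hquad : ∀ x, exp (L * min x γ) ≤ 1 + L * x + c * x ^ 2)
    (hD : MemLp D 2 P) (hD0 : P[D | G] =ᵐ[P] 0)
    (hV_meas : StronglyMeasurable[G] V) (hV : P[D ^ 2 | G] ≤ᵐ[P] V) :
    P[fun ω => exp (L * min (D ω) γ - c * V ω) | G] ≤ᵐ[P] 1 := by
  have hV_nonneg : 0 ≤ᵐ[P] V :=
    (condExp_nonneg (Eventually.of_forall fun ω => sq_nonneg (D ω))).trans hV
  have hsplit : (fun ω => exp (L * min (D ω) γ - c * V ω))
      = (fun ω => exp (-(c * V ω))) * fun ω => exp (L * min (D ω) γ) := by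
    funext ω
    rw [Pi.mul_apply, ← exp_add, neg_add_eq_sub]
  have hpull : P[fun ω => exp (L * min (D ω) γ - c * V ω) | G] =ᵐ[P]
      (fun ω => exp (-(c * V ω))) * P[fun ω => exp (L * min (D ω) γ) | G] := by
    rw [hsplit]
    refine condExp_stronglyMeasurable_mul_of_bound hG (by fun_prop)
      (integrable_exp_mul_min hquad hD) 1 ?_
    filter_upwards [hV_nonneg] with ω hω
    rw [norm_of_nonneg (exp_pos _).le, exp_le_one_iff, neg_nonpos]
    exact mul_nonneg hc hω
  filter_upwards [hpull, condExp_exp_mul_min_le hG hc hquad hD hD0 hV] with ω h1 h2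
  rw [h1, Pi.mul_apply, Pi.one_apply]
  calc exp (-(c * V ω)) * P[fun ω => exp (L * min (D ω) γ) | G] ω
      ≤ exp (-(c * V ω)) * (1 + c * V ω) := mul_le_mul_of_nonneg_left h2 (exp_pos _).le
    _ ≤ exp (-(c * V ω)) * exp (c * V ω) :=
        mul_le_mul_of_nonneg_left (by linarith [add_one_le_exp (c * V ω)]) (exp_pos _).le
    _ = 1 := by rw [← exp_add, neg_add_cancel, exp_zero]

theorem supermartingale_prod_Icc [IsFiniteMeasure P] {ℱ : Filtration ℕ m0}
    {g : ℕ → Ω → ℝ} {C : ℝ} (hg_meas : ∀ i, StronglyMeasurable[ℱ i] (g i))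
    (hg_nonneg : ∀ i ω, 0 ≤ g i ω) (hg_bdd : ∀ i, ∀ᵐ ω ∂P, g i ω ≤ C)
    (hg : ∀ i, P[g (i + 1) | ℱ i] ≤ᵐ[P] 1) :
    Supermartingale (fun n ω => ∏ i ∈ Finset.Icc 1 n, g i ω) ℱ P := by
  have hM_meas : ∀ n, StronglyMeasurable[ℱ n] fun ω => ∏ i ∈ Finset.Icc 1 n, g i ω :=
    fun n => Finset.stronglyMeasurable_fun_prod _ fun i hi =>
      (hg_meas i).mono (ℱ.mono (Finset.mem_Icc.1 hi).2)
  have hM_bdd : ∀ n, ∀ᵐ ω ∂P, ‖∏ i ∈ Finset.Icc 1 n, g i ω‖ ≤ C ^ n := by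
    intro n
    filter_upwards [ae_all_iff.2 hg_bdd] with ω hω
    rw [norm_of_nonneg (Finset.prod_nonneg fun i _ => hg_nonneg i ω)]
    exact (Finset.prod_le_prod (fun i _ => hg_nonneg i ω) fun i _ => hω i).trans_eq (by simp)
  have hg_int : ∀ i, Integrable (g i) P := fun i =>
    Integrable.of_bound ((hg_meas i).mono (ℱ.le i)).aestronglyMeasurable C <| by
      filter_upwards [hg_bdd i] with ω hω
      rwa [norm_of_nonneg (hg_nonneg i ω)]
  refine supermartingale_nat hM_meas (fun n =>
    Integrable.of_bound ((hM_meas n).mono (ℱ.le n)).aestronglyMeasurable _ (hM_bdd n)) fun n => ?_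
  have hsucc : (fun ω => ∏ i ∈ Finset.Icc 1 (n + 1), g i ω)
      = (fun ω => ∏ i ∈ Finset.Icc 1 n, g i ω) * g (n + 1) := by
    funext ω
    exact Finset.prod_Icc_succ_top (Nat.le_add_left 1 n) _
  rw [hsucc]
  filter_upwards [condExp_stronglyMeasurable_mul_of_bound (ℱ.le n) (hM_meas n)
    (hg_int (n + 1)) _ (hM_bdd n), hg n] with ω h1 h2
  rw [h1, Pi.mul_apply]
  exact mul_le_of_le_one_right (Finset.prod_nonneg fun i _ => hg_nonneg i ω) h2

theorem measure_le_ofReal_exp_neg_of_integral_le_one [IsFiniteMeasure P] {f : Ω → ℝ}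
    {s : Set Ω} {t : ℝ} (hf_nonneg : 0 ≤ᵐ[P] f) (hf_int : Integrable f P)
    (hf : ∫ ω, f ω ∂P ≤ 1) (hs : ∀ ω ∈ s, exp t ≤ f ω) : P s ≤ ENNReal.ofReal (exp (-t)) := by
  have hmarkov := mul_meas_ge_le_integral_of_nonneg hf_nonneg hf_int (exp t)
  have hle : P.real {ω | exp t ≤ f ω} ≤ exp (-t) := by
    calc P.real {ω | exp t ≤ f ω} = exp (-t) * (exp t * P.real {ω | exp t ≤ f ω}) := by
          rw [← mul_assoc, ← exp_add, neg_add_cancel, exp_zero, one_mul]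
      _ ≤ exp (-t) := mul_le_of_le_one_right (exp_pos _).le (hmarkov.trans hf)
  calc P s ≤ P {ω | exp t ≤ f ω} := measure_mono hs
    _ = ENNReal.ofReal (P.real {ω | exp t ≤ f ω}) := (ofReal_measureReal (measure_ne_top _ _)).symm
    _ ≤ ENNReal.ofReal (exp (-t)) := ENNReal.ofReal_le_ofReal hle

theorem MeasureTheory.Martingale.condExp_sub_ae_eq_zero [IsFiniteMeasure P] {ι : Type*}
    [Preorder ι] {ℱ : Filtration ι m0} {X : ι → Ω → ℝ} (hX : Martingale X ℱ P) {i j : ι}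
    (hij : i ≤ j) : P[X j - X i | ℱ i] =ᵐ[P] 0 := by
  filter_upwards [condExp_sub (hX.integrable j) (hX.integrable i) (ℱ i),
    hX.condExp_ae_eq hij] with ω h1 h2
  rw [h1, Pi.sub_apply, h2, condExp_of_stronglyMeasurable (ℱ.le i) (hX.stronglyMeasurable i)
    (hX.integrable i), sub_self, Pi.zero_apply]

theorem MeasureTheory.Martingale.condVar_ae_eq {ι : Type*} [Preorder ι] {ℱ : Filtration ι m0}
    {X : ι → Ω → ℝ} (hX : Martingale X ℱ P) {i j : ι} (hij : i ≤ j) :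
    Var[X j; P | ℱ i] =ᵐ[P] P[(X j - X i) ^ 2 | ℱ i] := by
  refine condExp_congr_ae ?_
  filter_upwards [hX.condExp_ae_eq hij] with ω h
  simp [h]

theorem MeasureTheory.Martingale.measure_ge_inter_le [IsProbabilityMeasure P]
    {ℱ : Filtration ℕ m0} {X V : ℕ → Ω → ℝ} (hX : Martingale X ℱ P) (hX2 : ∀ i, MemLp (X i) 2 P)
    (hV_meas : ∀ i, StronglyMeasurable[ℱ (i - 1)] (V i))
    (hV : ∀ i, Var[X i; P | ℱ (i - 1)] ≤ᵐ[P] V i) (n : ℕ) {m δ γ : ℝ}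
    (hm : 0 ≤ m) (hδ : 0 < δ) (hγ : 0 ≤ γ) :
    P ({ω | m ≤ X n ω - X 0 ω} ∩ {ω | ∑ i ∈ Finset.Icc 1 n, V i ω ≤ δ} ∩
        {ω | ∀ i ∈ Finset.Icc 1 n, X i ω - X (i - 1) ω ≤ γ})
      ≤ ENNReal.ofReal (exp (-(m ^ 2) / (2 * δ + 2 * γ * m / 3))) := by
  obtain ⟨L, hL, hLγ, hexponent⟩ := exists_mul_sub_mul_sq_eq hm hδ hγ
  set c := 3 / (2 * (3 - L * γ)) * L ^ 2
  have hc : 0 ≤ c := mul_nonneg (div_nonneg (by norm_num) (by linarith)) (sq_nonneg L)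
  set g : ℕ → Ω → ℝ := fun i ω => exp (L * min (X i ω - X (i - 1) ω) γ - c * V i ω)
  have hg_step : ∀ i, P[g (i + 1) | ℱ i] ≤ᵐ[P] 1 := fun i =>
    condExp_exp_mul_min_sub_le_one (ℱ.le i) hc (exp_mul_min_le hL hγ hLγ)
      ((hX2 (i + 1)).sub (hX2 i)) (hX.condExp_sub_ae_eq_zero (Nat.le_succ i)) (hV_meas (i + 1))
      ((hX.condVar_ae_eq (Nat.le_succ i)).symm.le.trans (hV (i + 1)))
  have hg_meas : ∀ i, StronglyMeasurable[ℱ i] (g i) := fun i =>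
    (by fun_prop : Continuous fun p : ℝ × ℝ => exp (L * min p.1 γ - c * p.2))
      |>.comp_stronglyMeasurable (((hX.stronglyMeasurable i).sub
        ((hX.stronglyMeasurable (i - 1)).mono (ℱ.mono (Nat.sub_le i 1)))).prodMk
          ((hV_meas i).mono (ℱ.mono (Nat.sub_le i 1))))
  have hg_bdd : ∀ i, ∀ᵐ ω ∂P, g i ω ≤ exp (L * γ) := by
    intro i
    filter_upwards [(condExp_nonneg (Eventually.of_forall fun ω => sq_nonneg _)).trans (hV i)]
      with ω hω
    have : 0 ≤ c * V i ω := mul_nonneg hc hω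
    have : L * min (X i ω - X (i - 1) ω) γ ≤ L * γ :=
      mul_le_mul_of_nonneg_left (min_le_right _ _) hL
    exact exp_le_exp.2 (by linarith)
  have hM := supermartingale_prod_Icc hg_meas (fun i ω => (exp_pos _).le) hg_bdd hg_step
  have hM_int : ∫ ω, ∏ i ∈ Finset.Icc 1 n, g i ω ∂P ≤ 1 := by
    simpa using hM.setIntegral_le (Nat.zero_le n) MeasurableSet.univ
  rw [neg_div, ← hexponent]
  refine measure_le_ofReal_exp_neg_of_integral_le_one (Eventually.of_forall fun ω =>
    Finset.prod_nonneg fun i _ => (exp_pos _).le) (hM.integrable n) hM_int ?_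
  rintro ω ⟨⟨hmω, hVω⟩, hγω⟩
  rw [← exp_sum]
  refine exp_le_exp.2 ?_
  have hmin : ∀ i ∈ Finset.Icc 1 n, L * min (X i ω - X (i - 1) ω) γ - c * V i ω
      = L * (X i ω - X (i - 1) ω) - c * V i ω := fun i hi => by rw [min_eq_left (hγω i hi)]
  rw [Finset.sum_congr rfl hmin, Finset.sum_sub_distrib, ← Finset.mul_sum, ← Finset.mul_sum,
    Finset.sum_Icc_sub_pred fun i => X i ω]
  nlinarith [mul_le_mul_of_nonneg_left hmω hL, mul_le_mul_of_nonneg_left hVω hc]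

theorem MeasureTheory.Martingale.measure_abs_ge_inter_le [IsProbabilityMeasure P]
    {ℱ : Filtration ℕ m0} {X : ℕ → Ω → ℝ} (hX : Martingale X ℱ P) (hX2 : ∀ i, MemLp (X i) 2 P)
    (n : ℕ) {m δ γ : ℝ} (hm : 0 ≤ m) (hδ : 0 ≤ δ) (hγ : 0 ≤ γ) :
    P ({ω | m ≤ |X n ω - X 0 ω|} ∩ {ω | ∑ i ∈ Finset.Icc 1 n, Var[X i; P | ℱ (i - 1)] ω ≤ δ} ∩
        {ω | ∀ i ∈ Finset.Icc 1 n, |X i ω - X (i - 1) ω| ≤ γ})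
      ≤ ENNReal.ofReal (2 * exp (-(m ^ 2) / (2 * δ + 2 * γ * m / 3))) := by
  refine le_ofReal_two_mul_exp_of_forall_gt prob_le_one fun δ' hδ' => ?_
  have hV_meas : ∀ i, StronglyMeasurable[ℱ (i - 1)] (Var[X i; P | ℱ (i - 1)]) :=
    fun i => stronglyMeasurable_condVar
  have hup := hX.measure_ge_inter_le hX2 hV_meas (fun i => EventuallyLE.rfl) n hm
    (hδ.trans_lt hδ') hγ
  have hdown := hX.neg.measure_ge_inter_le (fun i => (hX2 i).neg) hV_meas
    (fun i => (condVar_neg (X i)).le) n hm (hδ.trans_lt hδ') hγ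
  refine (measure_mono ?_).trans ((measure_union_le _ _).trans
    ((add_le_add hup hdown).trans_eq ?_))
  · rintro ω ⟨⟨hmω, hVω⟩, hγω⟩
    have hVω' : ∑ i ∈ Finset.Icc 1 n, Var[X i; P | ℱ (i - 1)] ω ≤ δ' := hVω.trans hδ'.le
    rcases le_abs.1 (show m ≤ |X n ω - X 0 ω| from hmω) with h | h
    · exact Or.inl ⟨⟨h, hVω'⟩, fun i hi => (le_abs_self _).trans (hγω i hi)⟩
    · refine Or.inr ⟨⟨?_, hVω'⟩, fun i hi => ?_⟩
      · show m ≤ -X n ω - -X 0 ω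
        linarith
      · show -X i ω - -X (i - 1) ω ≤ γ
        linarith [neg_abs_le (X i ω - X (i - 1) ω), hγω i hi]
  · rw [← ENNReal.ofReal_add (exp_pos _).le (exp_pos _).le, ← two_mul]

theorem measure_abs_sub_integral_ge_inter_le [IsProbabilityMeasure P] {ℱ : Filtration ℕ m0}
    (hℱ0 : ℱ 0 = ⊥) {Z : Ω → ℝ} {k : ℕ} (hZk : StronglyMeasurable[ℱ k] Z) (hZ2 : MemLp Z 2 P)
    {m δ γ : ℝ} (hm : 0 ≤ m) (hδ : 0 ≤ δ) (hγ : 0 ≤ γ) :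
    P ({ω | m ≤ |Z ω - ∫ ω, Z ω ∂P|} ∩
        {ω | ∑ i ∈ Finset.Icc 1 k, Var[P[Z | ℱ i]; P | ℱ (i - 1)] ω ≤ δ} ∩
        {ω | ∀ i ∈ Finset.Icc 1 k, |P[Z | ℱ i] ω - P[Z | ℱ (i - 1)] ω| ≤ γ})
      ≤ ENNReal.ofReal (2 * exp (-(m ^ 2) / (2 * δ + 2 * γ * m / 3))) := by
  have h := (martingale_condExp Z ℱ P).measure_abs_ge_inter_le
    (fun i => hZ2.condExp one_le_two) k hm hδ hγ
  rwa [condExp_of_stronglyMeasurable (ℱ.le k) hZk (hZ2.integrable one_le_two), hℱ0,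
    condExp_bot] at h

end

theorem stmt1 {Ω : Type*} [m0 : MeasurableSpace Ω] (P : Measure Ω) [IsProbabilityMeasure P]
    (k : ℕ) (F : ℕ → MeasurableSpace Ω)
    (hF0 : F 0 = ⊥) (hFmono : ∀ i j, i ≤ j → j ≤ k → F i ≤ F j)
    (hFle : ∀ i ≤ k, F i ≤ m0)
    (Z : Ω → ℝ) (hZmeas : Measurable[F k] Z) (hZ2 : MemLp Z 2 P)
    (Zi : ℕ → Ω → ℝ) (hZi : ∀ i ≤ k, Zi i = P[Z | F i])
    (CV : ℕ → Ω → ℝ)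
    (hCV : ∀ i, 1 ≤ i → i ≤ k →
      CV i = P[(fun ω => (Zi i ω - (P[Zi i | F (i - 1)]) ω) ^ 2) | F (i - 1)])
    (μ : ℝ) (hμ : μ = ∫ ω, Z ω ∂P)
    (m δ γ : ℝ) (hm : 0 ≤ m) (hδ : 0 ≤ δ) (hγ : 0 ≤ γ) :
    P ({ω | m ≤ |Z ω - μ|} ∩
        ({ω | ∑ i ∈ Finset.Icc 1 k, CV i ω ≤ δ} ∩
         {ω | ∀ i, 1 ≤ i → i ≤ k → |Zi i ω - Zi (i - 1) ω| ≤ γ}))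
      ≤ ENNReal.ofReal (2 * Real.exp (-(m ^ 2) / (2 * δ + 2 * γ * m / 3)))
    ∧ ((∀ᵐ ω ∂P, ∑ i ∈ Finset.Icc 1 k, CV i ω ≤ δ) →
       (∀ i, 1 ≤ i → i ≤ k → ∀ᵐ ω ∂P, |Zi i ω - Zi (i - 1) ω| ≤ γ) →
       P {ω | m ≤ |Z ω - μ|}
         ≤ ENNReal.ofReal (2 * Real.exp (-(m ^ 2) / (2 * δ + 2 * γ * m / 3)))) := by
  let ℱ : Filtration ℕ m0 :=
    ⟨fun i => F (min i k), fun i j hij => hFmono _ _ (min_le_min_right k hij) (min_le_right j k),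
      fun i => hFle _ (min_le_right i k)⟩
  have hℱ : ∀ i ≤ k, ℱ i = F i := fun i hi => congrArg F (min_eq_left hi)
  have hZi' : ∀ i ≤ k, Zi i = P[Z | ℱ i] := fun i hi => by rw [hZi i hi, hℱ i hi]
  have hevent : P ({ω | m ≤ |Z ω - μ|} ∩ ({ω | ∑ i ∈ Finset.Icc 1 k, CV i ω ≤ δ} ∩
      {ω | ∀ i, 1 ≤ i → i ≤ k → |Zi i ω - Zi (i - 1) ω| ≤ γ}))
      ≤ ENNReal.ofReal (2 * Real.exp (-(m ^ 2) / (2 * δ + 2 * γ * m / 3))) := by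
    refine (measure_mono ?_).trans (measure_abs_sub_integral_ge_inter_le
      ((hℱ 0 k.zero_le).trans hF0) (hℱ k le_rfl ▸ hZmeas.stronglyMeasurable) hZ2 hm hδ hγ)
    rintro ω ⟨hmω, hCVω, hγω⟩
    refine ⟨⟨by rwa [← hμ], ?_⟩, fun i hi => ?_⟩
    · refine (Finset.sum_congr rfl fun i hi => ?_).trans_le
        (show ∑ i ∈ Finset.Icc 1 k, CV i ω ≤ δ from hCVω)
      obtain ⟨h1, hk⟩ := Finset.mem_Icc.1 hi
      rw [hCV i h1 hk, hZi' i hk, hℱ (i - 1) (by omega)]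
      -- the right-hand side of `hCV` is `condVar` unfolded
      rfl
    · obtain ⟨h1, hk⟩ := Finset.mem_Icc.1 hi
      rw [← hZi' i hk, ← hZi' (i - 1) (by omega)]
      exact hγω i h1 hk
  refine ⟨hevent, fun hCVδ hγae => (measure_mono_ae ?_).trans hevent⟩
  filter_upwards [hCVδ, ae_all_iff.2 fun i => eventually_imp_distrib_left.2 fun h1 =>
    eventually_imp_distrib_left.2 (hγae i h1)] with ω hCVω hγω hmω
  exact ⟨hmω, hCVω, hγω⟩
end

section
/- Let (Q(x,y): x,y ∈ S) be the Q-matrix of a stable, conservative, non-explosive continuous-time Markov chain on a discrete state space S, with semigroup (P̂^t f)(x) := E_x f(X̂(t)). Let Ŝ ⊆ S satisfy sup_{x∈Ŝ}(−Q(x,x)) < ∞, and let f: S → ℝ be such that (P̂^t f)(x) exists for all t ≥ 0, x ∈ S, and such that |(P̂^s f)(x) − (P̂^s f)(y)| ≤ β̂ for all s ≥ 0, all x ∈ Ŝ and all y with Q(x,y) > 0, for some constant β̂ > 0. Then, for each fixed x ∈ Ŝ, the function s ↦ (P̂^s f)(x) is continuously differentiable on [0,∞). -/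
open MeasureTheory

/-- A stable, conservative, non-explosive continuous-time Markov chain on a discrete state
space `S`, encoded by its Q-matrix together with the family of path laws `law x` (the law of
the chain started at `x`).  The finite-dimensional distributions satisfy the (homogeneous)
Markov property in cylinder form, and the transition probabilities satisfy the Kolmogorov
backward equations. -/
structure CTMC (S : Type*) [MeasurableSpace S] where
  Q : S → S → ℝ
  law : S → Measure (ℝ → S)
  prob : ∀ x, IsProbabilityMeasure (law x)
  start : ∀ x, law x {ω | ω 0 = x} = 1
  offdiag_nonneg : ∀ x y, x ≠ y → 0 ≤ Q x y
  conservative : ∀ x, HasSum (Q x) 0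
  markov : ∀ (x : S) (n : ℕ) (t : ℕ → ℝ) (path : ℕ → S),
    StrictMonoOn t (Set.Iic n) → t 0 = 0 → path 0 = x →
    law x {ω | ∀ i ≤ n, ω (t i) = path i}
      = ∏ i ∈ Finset.range n, law (path i) {ω | ω (t (i + 1) - t i) = path (i + 1)}
  backward : ∀ (x y : S) (t : ℝ), 0 ≤ t →
    HasDerivWithinAt (fun s => (law x {ω | ω s = y}).toReal)
      (∑' z, Q x z * (law z {ω | ω t = y}).toReal) (Set.Ici 0) t

/-- `(P̂^t f)(x) = E_x [f(X̂(t))]`. -/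
noncomputable def CTMC.Pt {S : Type*} [MeasurableSpace S] (ch : CTMC S)
    (f : S → ℝ) (t : ℝ) (x : S) : ℝ :=
  ∫ ω, f (ω t) ∂ ch.law x

/-!
Write `q = -Q(x,x)` and `p_t(x,y)` for the transition probabilities. By the backward equation,
`t ↦ e^{q t} p_t(x,y)` has derivative `e^{q t} ∑_{w ≠ x} Q(x,w) p_t(w,y) ≥ 0`, so it is
nondecreasing. On `[0,T]` this dominates the series `e^{q t} P^t f(x) = ∑_y f(y) e^{q t} p_t(x,y)`
by its value at `T`, so `P^t f` is continuous; and by Tonelli the series of these nonnegative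
derivatives, weighted by `|f|`, is integrable. Hence for almost every `s` the sums over `y` and `w`
may be exchanged, which yields
`e^{q T} P^T f(x) = f(x) + ∫_0^T e^{q s} ((Q P^s f)(x) + q P^s f(x)) ds`.
Since the increments of `P^s f` along the jumps out of `x` are bounded by `β̂` and
`∑_{w ≠ x} Q(x,w) < ∞`, the series `(Q P^s f)(x) = ∑_{w ≠ x} Q(x,w) (P^s f(w) - P^s f(x))`
converges uniformly, so the integrand is continuous and the fundamental theorem of calculus applies.
-/

open Set Real

theorem tsum_mul_tsum_comm_of_nonneg {ι κ : Type*} {f : ι → ℝ} {a : κ → ℝ} {p : κ → ι → ℝ}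
    (ha : ∀ w, 0 ≤ a w) (hp : ∀ w y, 0 ≤ p w y) (hap : ∀ y, Summable fun w => a w * p w y)
    (hf : Summable fun y => |f y| * ∑' w, a w * p w y) :
    (Summable fun w => a w * ∑' y, f y * p w y) ∧
      ∑' y, f y * ∑' w, a w * p w y = ∑' w, a w * ∑' y, f y * p w y := by
  set F : ι → κ → ℝ := fun y w => f y * (a w * p w y)
  have habs : ∀ y w, |F y w| = |f y| * (a w * p w y) := fun y w => by
    rw [abs_mul, abs_of_nonneg (mul_nonneg (ha w) (hp w y))]
  have hF : Summable (Function.uncurry F) := by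
    refine summable_abs_iff.mp ((summable_prod_of_nonneg fun _ => abs_nonneg _).2 ⟨fun y => ?_, ?_⟩)
    · simpa only [Function.uncurry_apply_pair, habs] using (hap y).mul_left |f y|
    · simpa only [Function.uncurry_apply_pair, habs, tsum_mul_left] using hf
  have hcol : ∀ w, ∑' y, F y w = a w * ∑' y, f y * p w y := fun w => by
    rw [← tsum_mul_left]
    exact tsum_congr fun y => by ring
  refine ⟨?_, ?_⟩
  · simp only [← hcol]
    exact hF.prod_symm.prod
  · simp only [← hcol, ← tsum_mul_left]
    exact hF.tsum_comm.symm

theorem contDiffOn_Ici_of_eq_add_integral {g χ : ℝ → ℝ} {a c : ℝ} (hχ : ContinuousOn χ (Ici a))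
    (hg : ∀ t ∈ Ici a, g t = c + ∫ s in a..t, χ s) : ContDiffOn ℝ 1 g (Ici a) := by
  set χ' : ℝ → ℝ := fun s => χ (max a s)
  have hχ' : Continuous χ' :=
    hχ.comp_continuous (continuous_const.max continuous_id) fun s => le_max_left a s
  have hC : ContDiff ℝ 1 fun t => c + ∫ s in a..t, χ' s := by
    refine contDiff_const.add (contDiff_one_iff_deriv.2 ⟨fun t => ?_, ?_⟩)
    · exact (hχ'.integral_hasStrictDerivAt a t).hasDerivAt.differentiableAt
    · simpa only [funext (hχ'.deriv_integral χ' a)] using hχ'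
  refine hC.contDiffOn.congr fun t ht => ?_
  rw [hg t ht]
  congr 1
  refine intervalIntegral.integral_congr fun s hs => ?_
  rw [uIcc_of_le ht] at hs
  simp only [χ', max_eq_right hs.1]

theorem exp_mul_mul_exp_neg_mul (a t : ℝ) : exp (a * t) * exp (-a * t) = 1 := by
  rw [← exp_add]
  simp

namespace CTMC

variable {S : Type*} [MeasurableSpace S] (ch : CTMC S)

noncomputable def transProb (x : S) (t : ℝ) (y : S) : ℝ := (ch.law x {ω | ω t = y}).toReal

open Classical in
noncomputable def offDiagQ (x w : S) : ℝ := if w = x then 0 else ch.Q x w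

noncomputable def jumpTerm (x y : S) (s : ℝ) : ℝ := ∑' w, ch.offDiagQ x w * ch.transProb w s y

noncomputable def weightedTransProb (x : S) (t : ℝ) (y : S) : ℝ :=
  exp (-ch.Q x x * t) * ch.transProb x t y

noncomputable def generatorPt (f : S → ℝ) (s : ℝ) (x : S) : ℝ :=
  ∑' w, ch.offDiagQ x w * (ch.Pt f s w - ch.Pt f s x)

theorem transProb_nonneg (x : S) (t : ℝ) (y : S) : 0 ≤ ch.transProb x t y := ENNReal.toReal_nonneg

theorem transProb_le_one (x : S) (t : ℝ) (y : S) : ch.transProb x t y ≤ 1 := by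
  have := ch.prob x
  exact measureReal_le_one

theorem offDiagQ_nonneg (x w : S) : 0 ≤ ch.offDiagQ x w := by
  unfold offDiagQ
  split_ifs with h
  · exact le_rfl
  · exact ch.offdiag_nonneg x w (Ne.symm h)

theorem summable_offDiagQ (x : S) : Summable (ch.offDiagQ x) := by
  refine (ch.conservative x).summable.abs.of_norm_bounded fun w => ?_
  unfold offDiagQ
  split_ifs <;> simp

open Classical in
theorem tsum_offDiagQ (x : S) : ∑' w, ch.offDiagQ x w = -ch.Q x x := by
  have h := (ch.conservative x).summable.tsum_eq_add_tsum_ite x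
  rw [(ch.conservative x).tsum_eq] at h
  simp only [offDiagQ]
  linarith

theorem summable_offDiagQ_mul_transProb (x y : S) (s : ℝ) :
    Summable fun w => ch.offDiagQ x w * ch.transProb w s y :=
  (ch.summable_offDiagQ x).of_nonneg_of_le
    (fun w => mul_nonneg (ch.offDiagQ_nonneg x w) (ch.transProb_nonneg w s y))
    (fun w => mul_le_of_le_one_right (ch.offDiagQ_nonneg x w) (ch.transProb_le_one w s y))

theorem jumpTerm_nonneg (x y : S) (s : ℝ) : 0 ≤ ch.jumpTerm x y s :=
  tsum_nonneg fun w => mul_nonneg (ch.offDiagQ_nonneg x w) (ch.transProb_nonneg w s y)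

theorem continuousOn_jumpTerm (x y : S) : ContinuousOn (ch.jumpTerm x y) (Ici 0) := by
  refine continuousOn_tsum (fun w => continuousOn_const.mul fun t ht =>
    (ch.backward w y t ht).continuousWithinAt) (ch.summable_offDiagQ x) fun w s _ => ?_
  rw [Real.norm_of_nonneg (mul_nonneg (ch.offDiagQ_nonneg x w) (ch.transProb_nonneg w s y))]
  exact mul_le_of_le_one_right (ch.offDiagQ_nonneg x w) (ch.transProb_le_one w s y)

theorem continuousOn_exp_mul_jumpTerm (x y : S) :
    ContinuousOn (fun s => exp (-ch.Q x x * s) * ch.jumpTerm x y s) (Ici 0) :=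
  (continuous_exp.comp (continuous_const.mul continuous_id)).continuousOn.mul
    (ch.continuousOn_jumpTerm x y)

open Classical in
theorem tsum_Q_mul_transProb (x y : S) (t : ℝ) :
    ∑' z, ch.Q x z * ch.transProb z t y = ch.Q x x * ch.transProb x t y + ch.jumpTerm x y t := by
  have hsum : Summable fun z => ch.Q x z * ch.transProb z t y :=
    (ch.conservative x).summable.abs.of_norm_bounded fun z => by
      rw [norm_mul, Real.norm_of_nonneg (ch.transProb_nonneg z t y)]
      exact mul_le_of_le_one_right (abs_nonneg _) (ch.transProb_le_one z t y)
  rw [hsum.tsum_eq_add_tsum_ite x, jumpTerm]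
  congr 1
  refine tsum_congr fun w => ?_
  unfold offDiagQ
  split_ifs <;> simp

theorem hasDerivWithinAt_weightedTransProb (x y : S) {t : ℝ} (ht : 0 ≤ t) :
    HasDerivWithinAt (ch.weightedTransProb x · y) (exp (-ch.Q x x * t) * ch.jumpTerm x y t)
      (Ici 0) t := by
  have hp : HasDerivWithinAt (ch.transProb x · y)
      (ch.Q x x * ch.transProb x t y + ch.jumpTerm x y t) (Ici 0) t :=
    ch.tsum_Q_mul_transProb x y t ▸ ch.backward x y t ht
  have he : HasDerivWithinAt (fun s => exp (-ch.Q x x * s)) (exp (-ch.Q x x * t) * -ch.Q x x)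
      (Ici 0) t :=
    (((hasDerivAt_id t).const_mul (-ch.Q x x)).exp.congr_deriv (by simp)).hasDerivWithinAt
  exact (he.mul hp).congr_deriv (by ring)

theorem continuousOn_weightedTransProb (x y : S) :
    ContinuousOn (ch.weightedTransProb x · y) (Ici 0) := fun _ ht =>
  (ch.hasDerivWithinAt_weightedTransProb x y ht).continuousWithinAt

theorem weightedTransProb_sub_eq_integral (x y : S) {t₁ t₂ : ℝ} (h₁ : 0 ≤ t₁) (h₁₂ : t₁ ≤ t₂) :
    ch.weightedTransProb x t₂ y - ch.weightedTransProb x t₁ y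
      = ∫ s in t₁..t₂, exp (-ch.Q x x * s) * ch.jumpTerm x y s := by
  have hsub : Icc t₁ t₂ ⊆ Ici 0 := fun s hs => h₁.trans hs.1
  refine (intervalIntegral.integral_eq_sub_of_hasDeriv_right_of_le h₁₂
    ((ch.continuousOn_weightedTransProb x y).mono hsub) (fun s hs => ?_)
    (((ch.continuousOn_exp_mul_jumpTerm x y).mono ?_).intervalIntegrable)).symm
  · exact (ch.hasDerivWithinAt_weightedTransProb x y (h₁.trans hs.1.le)).mono
      (Ioi_subset_Ici (h₁.trans hs.1.le))
  · rwa [uIcc_of_le h₁₂]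

theorem integral_exp_mul_jumpTerm_nonneg (x y : S) {t₁ t₂ : ℝ} (h₁₂ : t₁ ≤ t₂) :
    0 ≤ ∫ s in t₁..t₂, exp (-ch.Q x x * s) * ch.jumpTerm x y s :=
  intervalIntegral.integral_nonneg h₁₂ fun s _ =>
    mul_nonneg (exp_pos _).le (ch.jumpTerm_nonneg x y s)

theorem monotoneOn_weightedTransProb (x y : S) : MonotoneOn (ch.weightedTransProb x · y) (Ici 0) :=
  fun _ h₁ _ _ h₁₂ => sub_nonneg.1 <| (ch.weightedTransProb_sub_eq_integral x y h₁ h₁₂).symm ▸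
    ch.integral_exp_mul_jumpTerm_nonneg x y h₁₂

theorem weightedTransProb_nonneg (x : S) (t : ℝ) (y : S) : 0 ≤ ch.weightedTransProb x t y :=
  mul_nonneg (exp_pos _).le (ch.transProb_nonneg x t y)

theorem aestronglyMeasurable_mul_exp_mul_jumpTerm (x y : S) (c T : ℝ) :
    AEStronglyMeasurable (fun s => c * (exp (-ch.Q x x * s) * ch.jumpTerm x y s))
      (volume.restrict (Ioc 0 T)) :=
  ((continuousOn_const.mul (ch.continuousOn_exp_mul_jumpTerm x y)).mono
    (Ioc_subset_Icc_self.trans Icc_subset_Ici_self)).aestronglyMeasurable measurableSet_Ioc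

theorem lintegral_enorm_mul_exp_mul_jumpTerm (x y : S) {T : ℝ} (hT : 0 ≤ T) (c : ℝ) :
    ∫⁻ s in Ioc 0 T, ‖c * (exp (-ch.Q x x * s) * ch.jumpTerm x y s)‖ₑ
      = ENNReal.ofReal (|c| * (ch.weightedTransProb x T y - ch.weightedTransProb x 0 y)) := by
  have hnonneg : ∀ s, 0 ≤ exp (-ch.Q x x * s) * ch.jumpTerm x y s := fun s =>
    mul_nonneg (exp_pos _).le (ch.jumpTerm_nonneg x y s)
  have hint : IntegrableOn (fun s => |c| * (exp (-ch.Q x x * s) * ch.jumpTerm x y s)) (Ioc 0 T) :=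
    ((continuousOn_const.mul ((ch.continuousOn_exp_mul_jumpTerm x y).mono
      Icc_subset_Ici_self)).integrableOn_Icc).mono_set Ioc_subset_Icc_self
  have habs : ∀ s, |c * (exp (-ch.Q x x * s) * ch.jumpTerm x y s)|
      = |c| * (exp (-ch.Q x x * s) * ch.jumpTerm x y s) := fun s => by
    rw [abs_mul, abs_of_nonneg (hnonneg s)]
  simp_rw [Real.enorm_eq_ofReal_abs, habs]
  rw [← ofReal_integral_eq_lintegral_ofReal hint
      (ae_of_all _ fun s => mul_nonneg (abs_nonneg c) (hnonneg s)),
    integral_const_mul, ← intervalIntegral.integral_of_le hT,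
    ch.weightedTransProb_sub_eq_integral x y le_rfl hT]

section Integrable

variable (f : S → ℝ) [MeasurableSingletonClass S]

theorem Pt_zero (x : S) : ch.Pt f 0 x = f x := by
  have := ch.prob x
  have hstart : ∀ᵐ ω ∂ch.law x, ω 0 = x := ae_iff.2 <|
    (prob_compl_eq_zero_iff (measurableSet_singleton x |>.preimage (measurable_pi_apply 0))).2
      (ch.start x)
  calc ch.Pt f 0 x = ∫ _, f x ∂ch.law x := integral_congr_ae (hstart.mono fun ω h => congrArg f h)
    _ = f x := by simp

theorem map_eval_singleton (x : S) (t : ℝ) (y : S) :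
    (ch.law x).map (fun ω => ω t) {y} = ch.law x {ω | ω t = y} := by
  rw [Measure.map_apply (measurable_pi_apply t) (measurableSet_singleton y)]
  rfl

variable [Countable S]

theorem integrable_map_eval {x : S} {t : ℝ} (hint : Integrable (fun ω => f (ω t)) (ch.law x)) :
    Integrable f ((ch.law x).map fun ω => ω t) := by
  rwa [integrable_map_measure (measurable_of_countable f).aestronglyMeasurable
    (measurable_pi_apply t).aemeasurable]

theorem Pt_eq_tsum {x : S} {t : ℝ} (hint : Integrable (fun ω => f (ω t)) (ch.law x)) :
    ch.Pt f t x = ∑' y, f y * ch.transProb x t y := by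
  have hPt : ch.Pt f t x = ∫ y, f y ∂(ch.law x).map fun ω => ω t :=
    (integral_map (measurable_pi_apply t).aemeasurable
      (measurable_of_countable f).aestronglyMeasurable).symm
  rw [hPt, integral_countable (ch.integrable_map_eval f hint)]
  refine tsum_congr fun y => ?_
  rw [measureReal_def, ch.map_eval_singleton, smul_eq_mul, mul_comm]
  rfl

theorem summable_abs_mul_transProb {x : S} {t : ℝ}
    (hint : Integrable (fun ω => f (ω t)) (ch.law x)) :
    Summable fun y => |f y| * ch.transProb x t y := by
  have hfin := (ch.integrable_map_eval f hint).2.ne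
  rw [lintegral_countable'] at hfin
  refine (ENNReal.summable_toReal hfin).congr fun y => ?_
  rw [ENNReal.toReal_mul, ch.map_eval_singleton, toReal_enorm, Real.norm_eq_abs]
  rfl

theorem exp_mul_Pt_eq_tsum {x : S} {t : ℝ} (hint : Integrable (fun ω => f (ω t)) (ch.law x)) :
    exp (-ch.Q x x * t) * ch.Pt f t x = ∑' y, f y * ch.weightedTransProb x t y := by
  rw [ch.Pt_eq_tsum f hint, ← tsum_mul_left]
  exact tsum_congr fun y => by rw [weightedTransProb]; ring

theorem summable_abs_mul_weightedTransProb {x : S} {t : ℝ}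
    (hint : Integrable (fun ω => f (ω t)) (ch.law x)) :
    Summable fun y => |f y| * ch.weightedTransProb x t y :=
  ((ch.summable_abs_mul_transProb f hint).mul_left (exp (-ch.Q x x * t))).congr fun y => by
    rw [weightedTransProb]
    ring

theorem continuousOn_exp_mul_Pt {x : S}
    (hint : ∀ t, 0 ≤ t → Integrable (fun ω => f (ω t)) (ch.law x)) :
    ContinuousOn (fun t => exp (-ch.Q x x * t) * ch.Pt f t x) (Ici 0) := by
  have hloc : ∀ T, 0 ≤ T → ContinuousOn (fun t => exp (-ch.Q x x * t) * ch.Pt f t x) (Icc 0 T) := by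
    intro T hT
    refine ContinuousOn.congr (f := fun t => ∑' y, f y * ch.weightedTransProb x t y) ?_
      fun t ht => ch.exp_mul_Pt_eq_tsum f (hint t ht.1)
    refine continuousOn_tsum (u := fun y => |f y| * ch.weightedTransProb x T y)
      (fun y => continuousOn_const.mul ((ch.continuousOn_weightedTransProb x y).mono
        Icc_subset_Ici_self)) (ch.summable_abs_mul_weightedTransProb f (hint T hT))
      fun y t ht => ?_
    rw [norm_mul, Real.norm_of_nonneg (ch.weightedTransProb_nonneg x t y), Real.norm_eq_abs]
    exact mul_le_mul_of_nonneg_left (ch.monotoneOn_weightedTransProb x y ht.1 hT ht.2)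
      (abs_nonneg _)
  intro t ht
  have h := hloc (t + 1) (by linarith [mem_Ici.1 ht])
  rw [← Ici_inter_Iic] at h
  exact (continuousWithinAt_inter (Iic_mem_nhds (by linarith))).1
    (h t ⟨ht, mem_Iic.2 (by linarith)⟩)

theorem continuousOn_Pt {x : S} (hint : ∀ t, 0 ≤ t → Integrable (fun ω => f (ω t)) (ch.law x)) :
    ContinuousOn (fun t => ch.Pt f t x) (Ici 0) :=
  ((continuous_exp.comp (continuous_const_mul (ch.Q x x))).continuousOn.mul
    (ch.continuousOn_exp_mul_Pt f hint)).congr fun t _ => by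
      rw [Pi.mul_apply, Function.comp_apply, ← mul_assoc, exp_mul_mul_exp_neg_mul, one_mul]

theorem tsum_lintegral_enorm_ne_top {x : S}
    (hint : ∀ t, 0 ≤ t → Integrable (fun ω => f (ω t)) (ch.law x)) {T : ℝ} (hT : 0 ≤ T) :
    ∑' y, ∫⁻ s in Ioc 0 T, ‖f y * (exp (-ch.Q x x * s) * ch.jumpTerm x y s)‖ₑ ≠ ⊤ := by
  simp_rw [ch.lintegral_enorm_mul_exp_mul_jumpTerm x _ hT]
  have hnonneg : ∀ y, 0 ≤ |f y| * (ch.weightedTransProb x T y - ch.weightedTransProb x 0 y) :=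
    fun y => mul_nonneg (abs_nonneg _)
      (sub_nonneg.2 (ch.monotoneOn_weightedTransProb x y self_mem_Ici hT hT))
  rw [← ENNReal.ofReal_tsum_of_nonneg hnonneg]
  · exact ENNReal.ofReal_ne_top
  · refine (ch.summable_abs_mul_weightedTransProb f (hint T hT)).of_nonneg_of_le hnonneg
      fun y => mul_le_mul_of_nonneg_left ?_ (abs_nonneg _)
    exact sub_le_self _ (ch.weightedTransProb_nonneg x 0 y)

theorem exp_mul_Pt_sub_eq_integral {x : S}
    (hint : ∀ t, 0 ≤ t → Integrable (fun ω => f (ω t)) (ch.law x)) {T : ℝ} (hT : 0 ≤ T) :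
    exp (-ch.Q x x * T) * ch.Pt f T x - f x
      = ∫ s in 0..T, ∑' y, f y * (exp (-ch.Q x x * s) * ch.jumpTerm x y s) := by
  have hrow : ∀ y, ∫ s in Ioc 0 T, f y * (exp (-ch.Q x x * s) * ch.jumpTerm x y s)
      = f y * ch.weightedTransProb x T y - f y * ch.weightedTransProb x 0 y := fun y => by
    rw [integral_const_mul, ← intervalIntegral.integral_of_le hT,
      ← ch.weightedTransProb_sub_eq_integral x y le_rfl hT, mul_sub]
  have hsummable : ∀ t, 0 ≤ t → Summable fun y => f y * ch.weightedTransProb x t y := fun t ht =>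
    (ch.summable_abs_mul_weightedTransProb f (hint t ht)).of_norm_bounded fun y => by
      rw [norm_mul, Real.norm_of_nonneg (ch.weightedTransProb_nonneg x t y), Real.norm_eq_abs]
  have hf : f x = exp (-ch.Q x x * 0) * ch.Pt f 0 x := by
    rw [ch.Pt_zero, mul_zero, exp_zero, one_mul]
  rw [intervalIntegral.integral_of_le hT, integral_tsum
      (fun y => ch.aestronglyMeasurable_mul_exp_mul_jumpTerm x y (f y) T)
      (ch.tsum_lintegral_enorm_ne_top f hint hT),
    tsum_congr hrow, (hsummable T hT).tsum_sub (hsummable 0 le_rfl), hf,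
    ch.exp_mul_Pt_eq_tsum f (hint T hT), ch.exp_mul_Pt_eq_tsum f (hint 0 le_rfl)]

theorem ae_summable_abs_mul_jumpTerm {x : S}
    (hint : ∀ t, 0 ≤ t → Integrable (fun ω => f (ω t)) (ch.law x)) {T : ℝ} (hT : 0 ≤ T) :
    ∀ᵐ s, s ∈ Ioc 0 T → Summable fun y => |f y| * ch.jumpTerm x y s := by
  have hmeas : ∀ y, AEMeasurable (fun s => ‖f y * (exp (-ch.Q x x * s) * ch.jumpTerm x y s)‖ₑ)
      (volume.restrict (Ioc 0 T)) := fun y =>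
    (ch.aestronglyMeasurable_mul_exp_mul_jumpTerm x y (f y) T).enorm
  have hfin := ch.tsum_lintegral_enorm_ne_top f hint hT
  rw [← lintegral_tsum hmeas] at hfin
  refine (ae_restrict_iff' measurableSet_Ioc).1 ?_
  filter_upwards [ae_lt_top' (AEMeasurable.tsum hmeas) hfin] with s hs
  refine ((ENNReal.summable_toReal hs.ne).mul_left (exp (ch.Q x x * s))).congr fun y => ?_
  rw [toReal_enorm, norm_mul, norm_mul, Real.norm_of_nonneg (exp_pos _).le,
    Real.norm_of_nonneg (ch.jumpTerm_nonneg x y s), Real.norm_eq_abs]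
  linear_combination (|f y| * ch.jumpTerm x y s) * exp_mul_mul_exp_neg_mul (ch.Q x x) s

theorem tsum_mul_jumpTerm_eq {x : S} {s : ℝ}
    (hint : ∀ w, Integrable (fun ω => f (ω s)) (ch.law w))
    (hsum : Summable fun y => |f y| * ch.jumpTerm x y s) :
    ∑' y, f y * ch.jumpTerm x y s = ch.generatorPt f s x - ch.Q x x * ch.Pt f s x := by
  obtain ⟨hsummable, hswap⟩ := tsum_mul_tsum_comm_of_nonneg (ch.offDiagQ_nonneg x)
    (fun w y => ch.transProb_nonneg w s y) (fun y => ch.summable_offDiagQ_mul_transProb x y s) hsum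
  have hPt : ∀ w, ∑' y, f y * ch.transProb w s y = ch.Pt f s w :=
    fun w => (ch.Pt_eq_tsum f (hint w)).symm
  simp only [hPt] at hsummable hswap
  rw [show ∑' y, f y * ch.jumpTerm x y s = _ from hswap, generatorPt]
  simp_rw [mul_sub]
  rw [hsummable.tsum_sub ((ch.summable_offDiagQ x).mul_right _), tsum_mul_right, tsum_offDiagQ]
  ring

theorem continuousOn_generatorPt {x : S}
    (hint : ∀ t, 0 ≤ t → ∀ w, Integrable (fun ω => f (ω t)) (ch.law w)) {β : ℝ}
    (hβ : ∀ s, 0 ≤ s → ∀ y, 0 < ch.Q x y → |ch.Pt f s x - ch.Pt f s y| ≤ β) :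
    ContinuousOn (fun s => ch.generatorPt f s x) (Ici 0) := by
  have hcont : ∀ w, ContinuousOn (fun t => ch.Pt f t w) (Ici 0) :=
    fun w => ch.continuousOn_Pt f fun t ht => hint t ht w
  refine continuousOn_tsum (u := fun w => ch.offDiagQ x w * β)
    (fun w => continuousOn_const.mul ((hcont w).sub (hcont x)))
    ((ch.summable_offDiagQ x).mul_right β) fun w s hs => ?_
  rw [norm_mul, Real.norm_of_nonneg (ch.offDiagQ_nonneg x w), Real.norm_eq_abs, abs_sub_comm]
  rcases (ch.offDiagQ_nonneg x w).eq_or_lt with hzero | hpos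
  · simp [← hzero]
  · have hQ : 0 < ch.Q x w := by
      unfold offDiagQ at hpos
      split_ifs at hpos
      · exact (lt_irrefl 0 hpos).elim
      · exact hpos
    exact mul_le_mul_of_nonneg_left (hβ s hs w hQ) hpos.le

theorem exp_mul_Pt_eq_add_integral {x : S}
    (hint : ∀ t, 0 ≤ t → ∀ w, Integrable (fun ω => f (ω t)) (ch.law w)) {T : ℝ} (hT : 0 ≤ T) :
    exp (-ch.Q x x * T) * ch.Pt f T x
      = f x + ∫ s in 0..T,
          exp (-ch.Q x x * s) * (ch.generatorPt f s x - ch.Q x x * ch.Pt f s x) := by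
  rw [← sub_eq_iff_eq_add', ch.exp_mul_Pt_sub_eq_integral f (fun t ht => hint t ht x) hT]
  refine intervalIntegral.integral_congr_ae ?_
  rw [uIoc_of_le hT]
  filter_upwards [ch.ae_summable_abs_mul_jumpTerm f (fun t ht => hint t ht x) hT] with s hsum hs
  simp_rw [mul_left_comm (f _), tsum_mul_left]
  rw [ch.tsum_mul_jumpTerm_eq f (hint s hs.1.le) (hsum hs)]

end Integrable

end CTMC

theorem stmt3_general {S : Type*} [MeasurableSpace S] [MeasurableSingletonClass S] [Countable S]
    (ch : CTMC S) (Sh : Set S)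
    (f : S → ℝ)
    (hint : ∀ (t : ℝ), 0 ≤ t → ∀ x, Integrable (fun ω => f (ω t)) (ch.law x))
    (βh : ℝ)
    (h1 : ∀ (s : ℝ), 0 ≤ s → ∀ x ∈ Sh, ∀ y, 0 < ch.Q x y →
      |ch.Pt f s x - ch.Pt f s y| ≤ βh)
    (x : S) (hx : x ∈ Sh) :
    ContDiffOn ℝ 1 (fun s => ch.Pt f s x) (Set.Ici 0) := by
  have hderiv : ContinuousOn
      (fun s => exp (-ch.Q x x * s) * (ch.generatorPt f s x - ch.Q x x * ch.Pt f s x)) (Ici 0) :=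
    (continuous_exp.comp (continuous_const_mul _)).continuousOn.mul
      ((ch.continuousOn_generatorPt f hint fun s hs => h1 s hs x hx).sub
        (continuousOn_const.mul (ch.continuousOn_Pt f fun t ht => hint t ht x)))
  have hweighted : ContDiffOn ℝ 1 (fun t => exp (-ch.Q x x * t) * ch.Pt f t x) (Ici 0) :=
    contDiffOn_Ici_of_eq_add_integral hderiv fun t ht => ch.exp_mul_Pt_eq_add_integral f hint ht
  have hexp : ContDiff ℝ 1 fun t => exp (ch.Q x x * t) := by fun_prop
  refine (hexp.contDiffOn.mul hweighted).congr fun t _ => ?_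
  rw [← mul_assoc, exp_mul_mul_exp_neg_mul, one_mul]

theorem stmt3 {S : Type*} [MeasurableSpace S] [MeasurableSingletonClass S] [Countable S]
    (ch : CTMC S) (Sh : Set S) (q : ℝ) (hq : ∀ x ∈ Sh, -ch.Q x x ≤ q)
    (f : S → ℝ)
    (hint : ∀ (t : ℝ), 0 ≤ t → ∀ x, Integrable (fun ω => f (ω t)) (ch.law x))
    (βh : ℝ) (hβ : 0 < βh)
    (h1 : ∀ (s : ℝ), 0 ≤ s → ∀ x ∈ Sh, ∀ y, 0 < ch.Q x y →
      |ch.Pt f s x - ch.Pt f s y| ≤ βh)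
    (x : S) (hx : x ∈ Sh) :
    ContDiffOn ℝ 1 (fun s => ch.Pt f s x) (Set.Ici 0) :=
  stmt3_general ch Sh f hint βh h1 x hx
end

section
/- Let X = X^{(n)} be the Bernoulli–Laplace chain and set r_n(δ) := ⌊(n/4)·log n + δn⌋. Then for every ε > 0, every n ≥ 4, every starting state j with |j − n/2| ≥ εn, and every δ with −(1/4)·log n ≤ δ ≤ 0: d_TV(L_j(X(r_n(δ))), π^{(n)}) ≥ 1 − 192·ε^{−2}·e^{−4|δ|}. -/
open MeasureTheory

/-- Transition matrix of the Bernoulli–Laplace chain on `{0,1,…,n} ⊆ ℕ`. -/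
noncomputable def blP (n : ℕ) (j l : ℕ) : ℝ :=
  if l = j + 1 then (1 - (j : ℝ) / n) ^ 2
  else if l + 1 = j then ((j : ℝ) / n) ^ 2
  else if l = j then 1 - (1 - (j : ℝ) / n) ^ 2 - ((j : ℝ) / n) ^ 2
  else 0

/-- The stationary (hypergeometric) distribution `π⁽ⁿ⁾` of the Bernoulli–Laplace chain:
`π⁽ⁿ⁾(j) = C(n,j) C(n,n-j) / C(2n,n)`. -/
noncomputable def blPi (n : ℕ) : Measure ℕ :=
  Measure.sum fun j =>
    (ENNReal.ofReal ((n.choose j : ℝ) * (n.choose (n - j) : ℝ) / ((2 * n).choose n : ℝ))) •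
      Measure.dirac j

/-- Total variation distance between two measures. -/
noncomputable def tvDist {α : Type*} [MeasurableSpace α] (μ ν : Measure α) : ℝ :=
  ⨆ A : Set α, |(μ A).toReal - (ν A).toReal|

/-!
Wilson's second-moment method. The statistic `F = blDev n`, `F m = 2m - n`, is an eigenfunction
of the transition operator with eigenvalue `β = 1 - 2/n`, and `F²` is mapped to `γ F² + 2` with
`γ = 1 - 4/n + 2/n² ≤ β²`. Started from `j`, the mean of `F (X r)` is therefore `βʳ F j` while
its variance stays below `n`; under `π⁽ⁿ⁾`, which is stationary by detailed balance, `F` has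
second moment at most `n`. Chebyshev's inequality on both sides of the set `{|F| < c}`,
`c = ε n βʳ`, gives `d_TV ≥ 1 - 2n/c²`, and at `r = r_n(δ)` one has `n β^{2r} ≥ e^{4|δ| - 3}`.
-/

open MeasureTheory Finset

lemma measure_eq_tsum_preimage_singleton_inter {α β : Type*} [MeasurableSpace α] [Countable β]
    (μ : Measure α) {f : α → β} (hf : ∀ b, MeasurableSet (f ⁻¹' {b})) {s : Set α}
    (hs : MeasurableSet s) : μ s = ∑' b, μ (f ⁻¹' {b} ∩ s) := by
  rw [← measure_iUnion (fun a b hab => (pairwise_disjoint_fiber f hab).mono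
    Set.inter_subset_left Set.inter_subset_left) fun b => (hf b).inter hs]
  congr 1
  ext ω
  simp

lemma toReal_tsum_eq_sum_range {w : ℕ → ENNReal} (n : ℕ) (hw : ∀ m, n < m → w m = 0)
    (hfin : ∀ m, w m ≠ ⊤) : (∑' m, w m).toReal = ∑ m ∈ range (n + 1), (w m).toReal := by
  rw [tsum_eq_sum (s := range (n + 1)) fun m hm => hw m (by simpa using hm),
    ENNReal.toReal_sum fun m _ => hfin m]

lemma toReal_tsum_indicator_eq_sum_range {w : ℕ → ENNReal} (n : ℕ) (hw : ∀ m, n < m → w m = 0)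
    (hfin : ∀ m, w m ≠ ⊤) (A : Set ℕ) :
    (∑' m, A.indicator w m).toReal
      = ∑ m ∈ range (n + 1), A.indicator (fun m => (w m).toReal) m := by
  rw [toReal_tsum_eq_sum_range n (fun m hm => by simp [hw m hm])
    (fun m => by by_cases h : m ∈ A <;> simp [h, hfin m])]
  exact sum_congr rfl fun m _ => by by_cases h : m ∈ A <;> simp [h]

lemma sum_mul_affine (s : Finset ℕ) (w f : ℕ → ℝ) (a b : ℝ) :
    ∑ m ∈ s, w m * (a * f m + b) = a * ∑ m ∈ s, w m * f m + b * ∑ m ∈ s, w m := by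
  rw [mul_sum, mul_sum, ← sum_add_distrib]
  exact sum_congr rfl fun m _ => by ring

lemma sum_mul_sub_sq_eq {α : Type*} (s : Finset α) {w f : α → ℝ} {M : ℝ}
    (hw : ∑ m ∈ s, w m = 1) (hM : ∑ m ∈ s, w m * f m = M) :
    ∑ m ∈ s, w m * (f m - M) ^ 2 = ∑ m ∈ s, w m * f m ^ 2 - M ^ 2 := by
  have hexpand (m : α) :
      w m * (f m - M) ^ 2 = w m * f m ^ 2 - 2 * M * (w m * f m) + M ^ 2 * w m := by
    ring
  rw [sum_congr rfl fun m _ => hexpand m, sum_add_distrib, sum_sub_distrib, ← mul_sum, ← mul_sum,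
    hw, hM]
  ring

lemma sum_indicator_le_sum_mul_sq_div_sq {α : Type*} (s : Finset α) {w f : α → ℝ}
    (hw : ∀ m ∈ s, 0 ≤ w m) {c : ℝ} (hc : 0 < c) {A : Set α} (hA : ∀ m ∈ s, m ∈ A → c ≤ |f m|) :
    ∑ m ∈ s, A.indicator w m ≤ (∑ m ∈ s, w m * f m ^ 2) / c ^ 2 := by
  rw [le_div_iff₀ (by positivity), sum_mul]
  refine sum_le_sum fun m hm => ?_
  by_cases h : m ∈ A
  · rw [Set.indicator_of_mem h]
    have hsq : c ^ 2 ≤ f m ^ 2 := by simpa only [sq_abs] using pow_le_pow_left₀ hc.le (hA m hm h) 2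
    exact mul_le_mul_of_nonneg_left hsq (hw m hm)
  · rw [Set.indicator_of_notMem h, zero_mul]
    exact mul_nonneg (hw m hm) (sq_nonneg _)

lemma abs_sub_le_tvDist {α : Type*} [MeasurableSpace α] (μ ν : Measure α) [IsProbabilityMeasure μ]
    [IsProbabilityMeasure ν] (A : Set α) : |(μ A).toReal - (ν A).toReal| ≤ tvDist μ ν := by
  refine le_ciSup (f := fun B => |(μ B).toReal - (ν B).toReal|) ⟨1, ?_⟩ A
  rintro _ ⟨B, rfl⟩
  have hle (ρ : Measure α) [IsProbabilityMeasure ρ] : (ρ B).toReal ≤ 1 := by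
    simpa using ENNReal.toReal_mono ENNReal.one_ne_top (prob_le_one (μ := ρ) (s := B))
  exact abs_sub_le_of_nonneg_of_le ENNReal.toReal_nonneg (hle μ) ENNReal.toReal_nonneg (hle ν)

lemma measurableSet_coord_eq {S : Type*} [MeasurableSpace S] [MeasurableSingletonClass S]
    (k : ℕ) (m : S) : MeasurableSet {ω : ℕ → S | ω k = m} :=
  (measurableSet_singleton m).preimage (measurable_pi_apply k)

section MarkovChain

variable {S : Type*} [MeasurableSpace S] {P : S → S → ℝ} {μ : S → Measure (ℕ → S)}

namespace IsMarkovChain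

lemma measure_ne_top (hμ : IsMarkovChain P μ) (x : S) (s : Set (ℕ → S)) : μ x s ≠ ⊤ :=
  have := hμ.1 x
  MeasureTheory.measure_ne_top (μ x) s

variable [MeasurableSingletonClass S]

lemma measure_coord_zero [DecidableEq S] (hμ : IsMarkovChain P μ) (x m : S) :
    μ x {ω | ω 0 = m} = if m = x then 1 else 0 := by
  have := hμ.1 x
  split_ifs with h
  · exact h ▸ hμ.2.1 x
  · refine measure_mono_null (fun ω (hω : ω 0 = m) (hx : ω 0 = x) => h (hω ▸ hx)) ?_
    exact (prob_compl_eq_zero_iff (measurableSet_coord_eq 0 x)).2 (hμ.2.1 x)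

variable [Countable S]

lemma measure_coord_eq_and_succ (hμ : IsMarkovChain P μ) (x : S) (k : ℕ) (m l : S) :
    μ x {ω | ω k = m ∧ ω (k + 1) = l} = μ x {ω | ω k = m} * ENNReal.ofReal (P m l) := by
  -- `IsMarkovChain` only speaks about cylinders, so split both events along the first `k` states
  let pre : (ℕ → S) → Fin k → S := fun ω i => ω i
  have hpre (f : Fin k → S) : MeasurableSet (pre ⁻¹' {f}) :=
    measurable_pi_lambda _ (fun i => measurable_pi_apply _) (measurableSet_singleton f)
  let path (f : Fin k → S) (i : ℕ) : S := if h : i < k then f ⟨i, h⟩ else if i = k then m else l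
  have path_k (f) : path f k = m := by simp [path]
  have path_succ (f) : path f (k + 1) = l := by simp [path]
  have cyl (f) (ω : ℕ → S) : (∀ i ≤ k, ω i = path f i) ↔ pre ω = f ∧ ω k = m := by
    simp only [funext_iff, pre]
    refine ⟨fun h => ⟨fun i => by simpa [path, i.2] using h i i.2.le, path_k f ▸ h k le_rfl⟩, ?_⟩
    rintro ⟨hf, hk⟩ i hi
    rcases hi.lt_or_eq with hi | rfl
    · simpa [path, hi] using hf ⟨i, hi⟩
    · rwa [path_k]
  have cyl_succ (f) (ω : ℕ → S) :
      (∀ i ≤ k + 1, ω i = path f i) ↔ pre ω = f ∧ ω k = m ∧ ω (k + 1) = l := by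
    rw [← and_assoc, ← cyl, ← path_succ f]
    exact ⟨fun h => ⟨fun i hi => h i (by omega), h _ le_rfl⟩,
      fun ⟨h, h'⟩ i hi => (Nat.le_succ_iff.1 hi).elim (h i) (· ▸ h')⟩
  rw [measure_eq_tsum_preimage_singleton_inter _ hpre (s := {ω | ω k = m ∧ ω (k + 1) = l})
      ((measurableSet_coord_eq k m).inter (measurableSet_coord_eq (k + 1) l)),
    measure_eq_tsum_preimage_singleton_inter _ hpre (measurableSet_coord_eq k m),
    ← ENNReal.tsum_mul_right]
  refine tsum_congr fun f => ?_
  have hstep := hμ.2.2 x k (path f)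
  rw [path_k, path_succ] at hstep
  convert hstep using 3 <;> ext ω
  exacts [(cyl_succ f ω).symm, (cyl f ω).symm]

lemma measure_coord_succ (hμ : IsMarkovChain P μ) (x : S) (k : ℕ) (l : S) :
    μ x {ω | ω (k + 1) = l} = ∑' m, μ x {ω | ω k = m} * ENNReal.ofReal (P m l) := by
  rw [measure_eq_tsum_preimage_singleton_inter _ (measurableSet_coord_eq k)
    (measurableSet_coord_eq (k + 1) l)]
  refine tsum_congr fun m => ?_
  rw [← hμ.measure_coord_eq_and_succ]
  rfl

lemma tsum_measure_coord (hμ : IsMarkovChain P μ) (x : S) (k : ℕ) :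
    ∑' m, μ x {ω | ω k = m} = 1 := by
  have := hμ.1 x
  rw [← measure_univ (μ := μ x),
    measure_eq_tsum_preimage_singleton_inter _ (measurableSet_coord_eq k) MeasurableSet.univ]
  simp only [Set.inter_univ]
  rfl

end IsMarkovChain

end MarkovChain

section BernoulliLaplace

variable {n : ℕ}

lemma blP_nonneg (hn : 0 < n) {m : ℕ} (hm : m ≤ n) (l : ℕ) : 0 ≤ blP n m l := by
  have h0 : (0 : ℝ) ≤ m / n := by positivity
  have h1 : (m : ℝ) / n ≤ 1 := div_le_one_of_le₀ (by exact_mod_cast hm) (by positivity)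
  unfold blP
  split_ifs <;> nlinarith

lemma blP_eq_zero_of_lt (hn : 0 < n) {m l : ℕ} (hm : m ≤ n) (hl : n < l) : blP n m l = 0 := by
  unfold blP
  split_ifs with h
  · obtain rfl : m = n := by omega
    rw [div_self (by positivity), sub_self, zero_pow two_ne_zero]
  all_goals first | rfl | omega

noncomputable def blDrift (n : ℕ) (g : ℕ → ℝ) (m : ℕ) : ℝ :=
  ∑ l ∈ range (n + 1), blP n m l * g l

lemma blDrift_eq (hn : 0 < n) {m : ℕ} (hm : m ≤ n) (g : ℕ → ℝ) :
    blDrift n g m = (1 - (m : ℝ) / n) ^ 2 * g (m + 1) + ((m : ℝ) / n) ^ 2 * g (m - 1)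
      + (1 - (1 - (m : ℝ) / n) ^ 2 - ((m : ℝ) / n) ^ 2) * g m := by
  have hterm (l : ℕ) : blP n m l * g l = (if m + 1 = l then (1 - (m : ℝ) / n) ^ 2 * g l else 0)
      + (if m - 1 = l then ((m : ℝ) / n) ^ 2 * g l else 0)
      + (if m = l then (1 - (1 - (m : ℝ) / n) ^ 2 - ((m : ℝ) / n) ^ 2) * g l else 0) := by
    rcases Nat.eq_zero_or_pos m with rfl | hm0
    · simp only [blP]
      split_ifs <;> first | (exfalso; omega) | simp
    · simp only [blP]
      split_ifs <;> first | (exfalso; omega) | ring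
  simp only [blDrift, hterm, sum_add_distrib, sum_ite_eq, mem_range]
  obtain rfl | hm' := hm.eq_or_lt
  · simp [div_self (Nat.cast_ne_zero.2 hn.ne' : (m : ℝ) ≠ 0)]
  · simp [hm', Nat.lt_succ_of_le hm, (Nat.sub_le m 1).trans_lt (Nat.lt_succ_of_le hm)]

noncomputable def blDev (n m : ℕ) : ℝ := 2 * m - n

lemma blDrift_blDev (hn : 0 < n) {m : ℕ} (hm : m ≤ n) :
    blDrift n (blDev n) m = (1 - 2 / n) * blDev n m := by
  rw [blDrift_eq hn hm]
  rcases m with _ | m <;> simp only [blDev, Nat.zero_sub, Nat.add_sub_cancel] <;> push_cast <;>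
    field_simp <;> ring

lemma blDrift_blDev_sq (hn : 0 < n) {m : ℕ} (hm : m ≤ n) :
    blDrift n (fun l => blDev n l ^ 2) m = (1 - 4 / n + 2 / n ^ 2) * blDev n m ^ 2 + 2 := by
  rw [blDrift_eq hn hm]
  rcases m with _ | m <;> simp only [blDev, Nat.zero_sub, Nat.add_sub_cancel] <;> push_cast <;>
    field_simp <;> ring

noncomputable def marginal (μ : ℕ → Measure (ℕ → ℕ)) (j k m : ℕ) : ℝ :=
  (μ j {ω | ω k = m}).toReal

variable {μ : ℕ → Measure (ℕ → ℕ)} {j : ℕ}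

lemma measure_coord_eq_zero_of_lt (hμ : IsMarkovChain (blP n) μ) (hn : 0 < n) (hj : j ≤ n)
    (k : ℕ) {m : ℕ} (hm : n < m) : μ j {ω | ω k = m} = 0 := by
  induction k generalizing m with
  | zero => rw [hμ.measure_coord_zero, if_neg (by omega)]
  | succ k ih =>
    rw [hμ.measure_coord_succ, ENNReal.tsum_eq_zero]
    intro l
    rcases le_or_gt l n with hl | hl
    · simp [blP_eq_zero_of_lt hn hl hm]
    · simp [ih hl]

lemma sum_marginal (hμ : IsMarkovChain (blP n) μ) (hn : 0 < n) (hj : j ≤ n) (k : ℕ) :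
    ∑ m ∈ range (n + 1), marginal μ j k m = 1 := by
  have h := toReal_tsum_eq_sum_range n (fun m => measure_coord_eq_zero_of_lt hμ hn hj k)
    (fun m => hμ.measure_ne_top j _)
  rwa [hμ.tsum_measure_coord, ENNReal.toReal_one, eq_comm] at h

lemma sum_marginal_zero_mul (hμ : IsMarkovChain (blP n) μ) (hj : j ≤ n) (g : ℕ → ℝ) :
    ∑ m ∈ range (n + 1), marginal μ j 0 m * g m = g j := by
  simp [marginal, hμ.measure_coord_zero, apply_ite ENNReal.toReal, Nat.lt_succ_of_le hj]

lemma marginal_succ (hμ : IsMarkovChain (blP n) μ) (hn : 0 < n) (hj : j ≤ n) (k l : ℕ) :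
    marginal μ j (k + 1) l = ∑ m ∈ range (n + 1), marginal μ j k m * blP n m l := by
  rw [marginal, hμ.measure_coord_succ, toReal_tsum_eq_sum_range n
    (fun m hm => by simp [measure_coord_eq_zero_of_lt hμ hn hj k hm])
    (fun m => ENNReal.mul_ne_top (hμ.measure_ne_top j _) ENNReal.ofReal_ne_top)]
  refine sum_congr rfl fun m hm => ?_
  rw [ENNReal.toReal_mul,
    ENNReal.toReal_ofReal (blP_nonneg hn (mem_range_succ_iff.1 hm) l), marginal]

lemma sum_marginal_succ_mul (hμ : IsMarkovChain (blP n) μ) (hn : 0 < n) (hj : j ≤ n) (k : ℕ)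
    (g : ℕ → ℝ) : ∑ l ∈ range (n + 1), marginal μ j (k + 1) l * g l
      = ∑ m ∈ range (n + 1), marginal μ j k m * blDrift n g m := by
  simp only [marginal_succ hμ hn hj, blDrift, sum_mul, mul_sum, mul_assoc]
  exact sum_comm

lemma map_coord_apply_toReal (hμ : IsMarkovChain (blP n) μ) (hn : 0 < n) (hj : j ≤ n) (r : ℕ)
    (A : Set ℕ) : ((μ j).map (fun ω => ω r) A).toReal
      = ∑ m ∈ range (n + 1), A.indicator (marginal μ j r) m := by
  rw [← Measure.tsum_indicator_apply_singleton _ A .of_discrete]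
  simp only [Measure.map_apply (measurable_pi_apply r) (measurableSet_singleton _)]
  exact toReal_tsum_indicator_eq_sum_range n (fun m => measure_coord_eq_zero_of_lt hμ hn hj r)
    (fun m => hμ.measure_ne_top j _) A

noncomputable def blPiMass (n m : ℕ) : ℝ :=
  (n.choose m : ℝ) * (n.choose (n - m) : ℝ) / ((2 * n).choose n : ℝ)

lemma blPiMass_nonneg (n m : ℕ) : 0 ≤ blPiMass n m := by
  unfold blPiMass
  positivity

lemma blPiMass_eq_zero_of_lt {m : ℕ} (hm : n < m) : blPiMass n m = 0 := by
  simp [blPiMass, Nat.choose_eq_zero_of_lt hm]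

lemma sum_blPiMass (n : ℕ) : ∑ m ∈ range (n + 1), blPiMass n m = 1 := by
  have vandermonde : ∑ m ∈ range (n + 1), n.choose m * n.choose (n - m) = (2 * n).choose n := by
    rw [two_mul, Nat.add_choose_eq, Nat.sum_antidiagonal_eq_sum_range_succ_mk]
  simp only [blPiMass]
  rw [← sum_div, div_eq_one_iff_eq (by exact_mod_cast (Nat.choose_pos (by omega)).ne'),
    ← vandermonde]
  push_cast
  rfl

lemma blPi_apply_toReal (A : Set ℕ) :
    (blPi n A).toReal = ∑ m ∈ range (n + 1), A.indicator (blPiMass n) m := by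
  have h := toReal_tsum_indicator_eq_sum_range (w := fun m => ENNReal.ofReal (blPiMass n m)) n
    (fun m hm => by simp [blPiMass_eq_zero_of_lt hm]) (fun m => ENNReal.ofReal_ne_top) A
  simp only [ENNReal.toReal_ofReal (blPiMass_nonneg n _)] at h
  rw [← h, blPi, Measure.sum_apply _ .of_discrete]
  congr 1
  refine tsum_congr fun m => ?_
  by_cases hm : m ∈ A <;> simp [hm, blPiMass]

instance isProbabilityMeasure_blPi (n : ℕ) : IsProbabilityMeasure (blPi n) :=
  ⟨(ENNReal.toReal_eq_one_iff _).1 (by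
    rw [blPi_apply_toReal]
    simpa using sum_blPiMass n)⟩

lemma blPiMass_detailedBalance {k : ℕ} (hk : k < n) :
    blPiMass n k * (1 - (k : ℝ) / n) ^ 2 = blPiMass n (k + 1) * (((k + 1 : ℕ) : ℝ) / n) ^ 2 := by
  have hn : (n : ℝ) ≠ 0 := Nat.cast_ne_zero.2 (by omega)
  have hD : ((2 * n).choose n : ℝ) ≠ 0 := Nat.cast_ne_zero.2 (Nat.choose_pos (by omega)).ne'
  have hchoose : (n.choose (k + 1) : ℝ) * (k + 1) = n.choose k * (n - k) := by
    have h := Nat.choose_succ_right_eq n k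
    rw [← Nat.cast_inj (R := ℝ)] at h
    push_cast [hk.le] at h
    exact h
  simp only [blPiMass, Nat.choose_symm hk.le, Nat.choose_symm (Nat.succ_le_of_lt hk)]
  field_simp
  push_cast
  linear_combination -(n.choose k * (n - k) + n.choose (k + 1) * (k + 1)) * hchoose

lemma sum_blPiMass_mul_blDrift (hn : 0 < n) (g : ℕ → ℝ) :
    ∑ m ∈ range (n + 1), blPiMass n m * blDrift n g m
      = ∑ m ∈ range (n + 1), blPiMass n m * g m := by
  have hsplit : ∀ m ∈ range (n + 1), blPiMass n m * blDrift n g m = blPiMass n m * g m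
      + blPiMass n m * (1 - (m : ℝ) / n) ^ 2 * (g (m + 1) - g m)
      + blPiMass n m * ((m : ℝ) / n) ^ 2 * (g (m - 1) - g m) := by
    intro m hm
    rw [blDrift_eq hn (mem_range_succ_iff.1 hm)]
    ring
  -- the flow up across each edge `k → k + 1` cancels the flow down across it
  rw [sum_congr rfl hsplit, sum_add_distrib, sum_add_distrib, add_assoc, add_eq_left,
    sum_range_succ, sum_range_succ', div_self (by positivity)]
  simp only [sub_self, CharP.cast_eq_zero, zero_div, ne_eq, OfNat.ofNat_ne_zero,
    not_false_eq_true, zero_pow, mul_zero, zero_mul, add_zero, Nat.add_sub_cancel,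
    ← sum_add_distrib]
  refine sum_eq_zero fun k hk => ?_
  rw [← blPiMass_detailedBalance (mem_range.1 hk)]
  ring

lemma sum_blPiMass_mul_blDev_sq_le (hn : 0 < n) :
    ∑ m ∈ range (n + 1), blPiMass n m * blDev n m ^ 2 ≤ n := by
  have hN : (1 : ℝ) ≤ n := by exact_mod_cast hn
  have hfixed := sum_blPiMass_mul_blDrift hn (fun l => blDev n l ^ 2)
  rw [sum_congr rfl fun m hm => by
    rw [blDrift_blDev_sq hn (mem_range_succ_iff.1 hm)], sum_mul_affine,
    sum_blPiMass] at hfixed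
  have hgap : 0 < 4 / (n : ℝ) - 2 / n ^ 2 := by
    rw [sub_pos, div_lt_div_iff₀ (by positivity) (by positivity)]
    nlinarith
  have h2 : 2 ≤ (n : ℝ) * (4 / n - 2 / n ^ 2) := by
    have : (n : ℝ) * (4 / n - 2 / n ^ 2) = 4 - 2 / n := by field_simp
    rw [this, le_sub_comm, div_le_iff₀ (by positivity)]
    linarith
  refine le_of_mul_le_mul_right ?_ hgap
  linarith

lemma sum_marginal_mul_blDev (hμ : IsMarkovChain (blP n) μ) (hn : 0 < n) (hj : j ≤ n) (k : ℕ) :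
    ∑ m ∈ range (n + 1), marginal μ j k m * blDev n m = (1 - 2 / n) ^ k * blDev n j := by
  induction k with
  | zero => simp [sum_marginal_zero_mul hμ hj]
  | succ k ih =>
    rw [sum_marginal_succ_mul hμ hn hj, sum_congr rfl fun m hm => by
      rw [blDrift_blDev hn (mem_range_succ_iff.1 hm), mul_left_comm],
      ← mul_sum, ih, pow_succ']
    ring

lemma sum_marginal_mul_blDev_sq_sub_sq_le (hμ : IsMarkovChain (blP n) μ) (hn : 4 ≤ n)
    (hj : j ≤ n) (k : ℕ) :
    ∑ m ∈ range (n + 1), marginal μ j k m * blDev n m ^ 2 - ((1 - 2 / n) ^ k * blDev n j) ^ 2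
      ≤ n := by
  have hn0 : 0 < n := by omega
  have hN : (4 : ℝ) ≤ n := by exact_mod_cast hn
  have hγ0 : 0 ≤ 1 - 4 / (n : ℝ) + 2 / n ^ 2 := by
    have : 1 - 4 / (n : ℝ) + 2 / n ^ 2 = ((n - 2) ^ 2 - 2) / n ^ 2 := by field_simp; ring
    rw [this]
    exact div_nonneg (by nlinarith) (by positivity)
  have hγn : (1 - 4 / (n : ℝ) + 2 / n ^ 2) * n + 2 ≤ n := by
    have : (1 - 4 / (n : ℝ) + 2 / n ^ 2) * n + 2 = n - 2 + 2 / n := by field_simp; ring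
    rw [this]
    linarith [div_le_self (zero_le_two : (0 : ℝ) ≤ 2) (by linarith : (1 : ℝ) ≤ n)]
  induction k with
  | zero => simp [sum_marginal_zero_mul hμ hj]
  | succ k ih =>
    rw [sum_marginal_succ_mul hμ hn0 hj, sum_congr rfl fun m hm => by
      rw [blDrift_blDev_sq hn0 (mem_range_succ_iff.1 hm)], sum_mul_affine,
      sum_marginal hμ hn0 hj k]
    -- `1 - 4/n + 2/n² ≤ (1 - 2/n)²`: the squared mean contracts at least as fast as the
    -- second moment
    have hcontract := mul_le_mul_of_nonneg_left ih hγ0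
    have hslack : 0 ≤ 2 / (n : ℝ) ^ 2 * ((1 - 2 / (n : ℝ)) ^ k * blDev n j) ^ 2 := by positivity
    linear_combination hcontract + hslack + hγn

lemma one_sub_le_tvDist (hμ : IsMarkovChain (blP n) μ) (hn : 4 ≤ n) (hj : j ≤ n) (r : ℕ)
    {c : ℝ} (hc : 0 < c) (hfar : 2 * c ≤ |(1 - 2 / n) ^ r * blDev n j|) :
    1 - 2 * (n / c ^ 2) ≤ tvDist ((μ j).map fun ω => ω r) (blPi n) := by
  have hn0 : 0 < n := by omega
  set M := (1 - 2 / (n : ℝ)) ^ r * blDev n j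
  let A : Set ℕ := {m | |blDev n m| < c}
  have hchain : ((μ j).map (fun ω => ω r) A).toReal ≤ n / c ^ 2 := by
    rw [map_coord_apply_toReal hμ hn0 hj]
    calc _ ≤ (∑ m ∈ range (n + 1), marginal μ j r m * (blDev n m - M) ^ 2) / c ^ 2 :=
          sum_indicator_le_sum_mul_sq_div_sq _ (fun m _ => ENNReal.toReal_nonneg) hc
            fun m _ (hm : |blDev n m| < c) => by
              have := abs_sub_abs_le_abs_sub M (blDev n m)
              rw [abs_sub_comm] at this
              linarith
      _ ≤ n / c ^ 2 := by
          rw [sum_mul_sub_sq_eq _ (sum_marginal hμ hn0 hj r) (sum_marginal_mul_blDev hμ hn0 hj r)]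
          gcongr
          exact sum_marginal_mul_blDev_sq_sub_sq_le hμ hn hj r
  have hstat : (blPi n Aᶜ).toReal ≤ n / c ^ 2 := by
    rw [blPi_apply_toReal]
    refine (sum_indicator_le_sum_mul_sq_div_sq _ (f := blDev n) (fun m _ => blPiMass_nonneg n m)
      hc fun m _ hm => not_lt.1 hm).trans ?_
    gcongr
    exact sum_blPiMass_mul_blDev_sq_le hn0
  have hcompl : (blPi n A).toReal = 1 - (blPi n Aᶜ).toReal := by
    have h := measureReal_compl (μ := blPi n) (s := A) .of_discrete
    simp only [Measure.real, measure_univ, ENNReal.toReal_one] at h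
    linarith
  have := hμ.1 j
  have := Measure.isProbabilityMeasure_map (μ := μ j) (measurable_pi_apply r).aemeasurable
  have htv := abs_sub_le_tvDist ((μ j).map fun ω => ω r) (blPi n) A
  rw [abs_sub_comm] at htv
  linarith [le_abs_self ((blPi n A).toReal - ((μ j).map (fun ω => ω r) A).toReal)]

end BernoulliLaplace

lemma one_sub_two_div_pos {n : ℕ} (hn : 2 < n) : 0 < 1 - 2 / (n : ℝ) := by
  rw [sub_pos, div_lt_one (by positivity)]
  exact_mod_cast hn

lemma neg_two_div_le_log_one_sub_two_div {n : ℕ} (hn : 2 < n) :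
    -(2 / ((n : ℝ) - 2)) ≤ Real.log (1 - 2 / n) := by
  have hn2 : (n : ℝ) - 2 ≠ 0 := sub_ne_zero.2 (by exact_mod_cast hn.ne')
  have h : 1 - (1 - 2 / (n : ℝ))⁻¹ = -(2 / ((n : ℝ) - 2)) := by
    field_simp
    ring
  exact h ▸ Real.one_sub_inv_le_log_of_pos (one_sub_two_div_pos hn)

lemma exp_le_mul_pow_floor_sq {n : ℕ} (hn : 4 ≤ n) {δ : ℝ} (hδ1 : -(1 / 4) * Real.log n ≤ δ)
    (hδ2 : δ ≤ 0) :
    Real.exp (-3 + 4 * |δ|)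
      ≤ n * ((1 - 2 / n) ^ ⌊(n : ℝ) / 4 * Real.log n + δ * n⌋₊) ^ 2 := by
  set r := ⌊(n : ℝ) / 4 * Real.log n + δ * n⌋₊
  have hN : (4 : ℝ) ≤ n := by exact_mod_cast hn
  have hβ := one_sub_two_div_pos (n := n) (by omega)
  have hlog_nonneg : 0 ≤ Real.log n := Real.log_nonneg (by linarith)
  have hR : 0 ≤ (n : ℝ) / 4 * Real.log n + δ * n := by nlinarith
  have hr : (r : ℝ) ≤ (n : ℝ) / 4 * Real.log n + δ * n := Nat.floor_le hR
  have hlogβ := neg_two_div_le_log_one_sub_two_div (n := n) (by omega)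
  have hlogβ_nonpos : Real.log (1 - 2 / n) ≤ 0 :=
    Real.log_nonpos hβ.le (by linarith [div_pos two_pos (by linarith : (0 : ℝ) < n)])
  have hkey : -3 + 4 * |δ| ≤ Real.log n + 2 * r * Real.log (1 - 2 / n) := by
    have h1 : 2 * ((n : ℝ) / 4 * Real.log n + δ * n) * Real.log (1 - 2 / n)
        ≤ 2 * r * Real.log (1 - 2 / n) :=
      mul_le_mul_of_nonpos_right (by linarith) hlogβ_nonpos
    have h2 : 2 * ((n : ℝ) / 4 * Real.log n + δ * n) * -(2 / ((n : ℝ) - 2))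
        ≤ 2 * ((n : ℝ) / 4 * Real.log n + δ * n) * Real.log (1 - 2 / n) :=
      mul_le_mul_of_nonneg_left hlogβ (by linarith)
    have h3 : -3 + 4 * |δ| - Real.log n
        ≤ 2 * ((n : ℝ) / 4 * Real.log n + δ * n) * -(2 / ((n : ℝ) - 2)) := by
      have : 2 * ((n : ℝ) / 4 * Real.log n + δ * n) * -(2 / ((n : ℝ) - 2))
          = -(n * (Real.log n + 4 * δ)) / (n - 2) := by
        have : (n : ℝ) - 2 ≠ 0 := by linarith
        field_simp
        ring
      rw [abs_of_nonpos hδ2, this, le_div_iff₀ (by linarith)]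
      nlinarith [Real.log_le_sub_one_of_pos (by linarith : (0 : ℝ) < n)]
    linarith
  calc Real.exp (-3 + 4 * |δ|) ≤ Real.exp (Real.log n + (2 * r : ℕ) * Real.log (1 - 2 / n)) := by
        refine Real.exp_le_exp.2 ?_
        push_cast
        linarith
    _ = n * ((1 - 2 / n) ^ r) ^ 2 := by
        rw [Real.exp_add, Real.exp_log (by linarith), Real.exp_nat_mul, Real.exp_log hβ, ← pow_mul,
          mul_comm 2 r]

lemma two_mul_div_sq_le {n : ℕ} (hn : 4 ≤ n) {ε : ℝ} (hε : 0 < ε) {δ : ℝ}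
    (hδ1 : -(1 / 4) * Real.log n ≤ δ) (hδ2 : δ ≤ 0) :
    2 * (n / (ε * n * (1 - 2 / (n : ℝ)) ^ ⌊(n : ℝ) / 4 * Real.log n + δ * n⌋₊) ^ 2)
      ≤ 192 / ε ^ 2 * Real.exp (-4 * |δ|) := by
  have hβ := one_sub_two_div_pos (n := n) (by omega)
  have hexp3 : Real.exp 3 ≤ 96 := by
    have h := Real.exp_one_lt_d9
    rw [show (3 : ℝ) = (3 : ℕ) * 1 by norm_num, Real.exp_nat_mul]
    calc _ ≤ (2.7182818286 : ℝ) ^ 3 := by gcongr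
      _ ≤ 96 := by norm_num
  calc _ = 2 / (ε ^ 2 * (n * ((1 - 2 / (n : ℝ)) ^ ⌊(n : ℝ) / 4 * Real.log n + δ * n⌋₊) ^ 2)) := by
        field_simp
    _ ≤ 2 / (ε ^ 2 * Real.exp (-3 + 4 * |δ|)) := by
        gcongr
        exact exp_le_mul_pow_floor_sq hn hδ1 hδ2
    _ = 2 * Real.exp 3 / ε ^ 2 * Real.exp (-4 * |δ|) := by
        field_simp
        rw [← Real.exp_add, ← Real.exp_add]
        ring_nf
        simp
    _ ≤ 192 / ε ^ 2 * Real.exp (-4 * |δ|) := by gcongr; linarith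

/-- Lower bound (total variation far from equilibrium before the cut-off time) for the
Bernoulli–Laplace chain: with `r_n(δ) = ⌊(n/4) log n + δ n⌋`,
`d_TV(L_j(X(r_n(δ))), π⁽ⁿ⁾) ≥ 1 - 192 ε⁻² e^{-4|δ|}`. -/
theorem stmt10 (n : ℕ) (hn : 4 ≤ n) (μ : ℕ → Measure (ℕ → ℕ))
    (hμ : IsMarkovChain (blP n) μ)
    (ε : ℝ) (hε : 0 < ε) (j : ℕ) (hj : j ≤ n) (hjfar : ε * n ≤ |(j : ℝ) - n / 2|)
    (δ : ℝ) (hδ1 : -(1 / 4) * Real.log n ≤ δ) (hδ2 : δ ≤ 0) :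
    1 - 192 / ε ^ 2 * Real.exp (-4 * |δ|)
      ≤ tvDist (Measure.map (fun ω : ℕ → ℕ => ω ⌊(n : ℝ) / 4 * Real.log n + δ * n⌋₊) (μ j))
          (blPi n) := by
  set r := ⌊(n : ℝ) / 4 * Real.log n + δ * n⌋₊
  have hβ : 0 < (1 - 2 / (n : ℝ)) ^ r := pow_pos (one_sub_two_div_pos (by omega)) r
  have hc : 0 < ε * n * (1 - 2 / (n : ℝ)) ^ r := by
    have : (0 : ℝ) < n := by exact_mod_cast (show 0 < n by omega)
    positivity
  have hfar : 2 * (ε * n * (1 - 2 / (n : ℝ)) ^ r) ≤ |(1 - 2 / n) ^ r * blDev n j| := by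
    rw [abs_mul, abs_of_pos hβ, blDev, show 2 * (j : ℝ) - n = 2 * (j - n / 2) by ring, abs_mul,
      abs_two]
    nlinarith
  linarith [one_sub_le_tvDist hμ hn hj r hc hfar, two_mul_div_sq_le hn hε hδ1 hδ2]
end

section
/- Consider the two-host disease model X^{(n)} with R < 1, and let (U^{(n)}, V^{(n)}) be the Markovian coupling of two copies of X^{(n)} defined as follows: in any coordinate where the two copies currently differ, each copy makes its transitions in that coordinate independently at its own rates; in any coordinate where they currently agree, for each transition direction they jump together at the minimum of the two rates and singly at the excess rate. Then this coupling is contractive with constant ρ with respect to the metric d(x,y) := ‖x − y‖_θ; that is, the generator 𝒜̂ of the coupled chain satisfies (𝒜̂ d)(u,v) ≤ −ρ·d(u,v) for all u, v ∈ ℤ₊². -/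
/-- The off-diagonal transition rates of the two-host disease model with infection
parameters `a, b` (i.e. α, β), recovery parameters `g, d` (i.e. γ, δ) and immigration
parameters `m, v` (i.e. μ, ν), at scale parameter `n`. -/
noncomputable def thRate (a b g d m v : ℝ) (n : ℕ) (x y : ℕ × ℕ) : ℝ :=
  if y = (x.1 + 1, x.2) then a * x.2 + m * n
  else if y = (x.1, x.2 + 1) then b * x.1 + v * n
  else if x.1 ≠ 0 ∧ y = (x.1 - 1, x.2) then g * x.1
  else if x.2 ≠ 0 ∧ y = (x.1, x.2 - 1) then d * x.2
  else 0

/-- The coupled (off-diagonal) transition rates of the Markovian coupling `(U⁽ⁿ⁾, V⁽ⁿ⁾)`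
of two copies of the two-host chain: in each coordinate where the copies differ, each copy
moves independently at its own rate; in each coordinate where they agree, for each
direction they jump together at the minimum of the two rates, and singly at the excess
rate. -/
noncomputable def coupQ (a b g d m v : ℝ) (n : ℕ) (u w : ℕ × ℕ)
    (q : (ℕ × ℕ) × (ℕ × ℕ)) : ℝ :=
  let R := thRate a b g d m v n
  let term := fun (mvu mvw : ℕ × ℕ) (agree : Bool) =>
    if agree then
      (if q = (mvu, mvw) then min (R u mvu) (R w mvw) else 0)
      + (if q = (mvu, w) then max 0 (R u mvu - R w mvw) else 0)
      + (if q = (u, mvw) then max 0 (R w mvw - R u mvu) else 0)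
    else
      (if q = (mvu, w) then R u mvu else 0) + (if q = (u, mvw) then R w mvw else 0)
  term (u.1 + 1, u.2) (w.1 + 1, w.2) (decide (u.1 = w.1))
    + term (u.1, u.2 + 1) (w.1, w.2 + 1) (decide (u.2 = w.2))
    + term (u.1 - 1, u.2) (w.1 - 1, w.2) (decide (u.1 = w.1))
    + term (u.1, u.2 - 1) (w.1, w.2 - 1) (decide (u.2 = w.2))

/-- The metric `d(x,y) = ‖x - y‖_θ = |x₁ - y₁| + θ|x₂ - y₂|`. -/
noncomputable def dTheta (θ : ℝ) (x y : ℕ × ℕ) : ℝ :=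
  |(x.1 : ℝ) - (y.1 : ℝ)| + θ * |(x.2 : ℝ) - (y.2 : ℝ)|

lemma hasSum_single_mul {α : Type*} [DecidableEq α] (p : α) (c : ℝ) (gf : α → ℝ) :
    HasSum (fun q => (if q = p then c else 0) * gf q) (c * gf p) := by
  have h : (fun q => (if q = p then c else 0) * gf q)
      = fun q => if q = p then c * gf p else 0 := by
    funext q; by_cases hq : q = p <;> simp [hq]
  rw [h]; exact hasSum_ite_eq p _

lemma max_pair (r s : ℝ) : max 0 (r - s) + max 0 (s - r) = |r - s| := by
  rcases le_total r s with h | h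
  · rw [max_eq_left (by linarith), max_eq_right (by linarith), abs_of_nonpos (by linarith)]; ring
  · rw [max_eq_right (by linarith), max_eq_left (by linarith), abs_of_nonneg (by linarith)]; ring

lemma up_pair (r s : ℝ) (j k : ℕ) (h : j ≠ k) :
    r * (|(j:ℝ) + 1 - k| - |(j:ℝ) - k|) + s * (|(j:ℝ) - ((k:ℝ) + 1)| - |(j:ℝ) - k|)
      ≤ |r - s| := by
  rcases lt_or_gt_of_ne h with hlt | hgt
  · have h1 : (j:ℝ) + 1 ≤ k := by exact_mod_cast hlt
    rw [abs_of_nonpos (by linarith), abs_of_nonpos (by linarith), abs_of_nonpos (by linarith)]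
    have h2 : s - r ≤ |r - s| := by rw [abs_sub_comm]; exact le_abs_self _
    linarith [le_abs_self (r - s)]
  · have h1 : (k:ℝ) + 1 ≤ j := by exact_mod_cast hgt
    rw [abs_of_nonneg (by linarith), abs_of_nonneg (by linarith), abs_of_nonneg (by linarith)]
    linarith [le_abs_self (r - s)]

lemma down_core (c : ℝ) (hc : 0 ≤ c) (j k : ℕ) (h : k < j) :
    c * j * (|((j - 1 : ℕ) : ℝ) - k| - |(j:ℝ) - k|)
      + c * k * (|(j:ℝ) - ((k - 1 : ℕ) : ℝ)| - |(j:ℝ) - k|)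
      ≤ -(c * |(j:ℝ) - k|) := by
  have hj : (k:ℝ) + 1 ≤ j := by exact_mod_cast h
  have hj1 : ((j - 1 : ℕ) : ℝ) = (j:ℝ) - 1 := by
    rw [Nat.cast_sub (by omega)]; norm_num
  have hk1 : ((k - 1 : ℕ) : ℝ) ≤ (k:ℝ) := by exact_mod_cast Nat.sub_le k 1
  have hk2 : (k:ℝ) - 1 ≤ ((k - 1 : ℕ) : ℝ) := by
    have h' : k ≤ (k - 1) + 1 := by omega
    have := (Nat.cast_le (α := ℝ)).2 h'
    push_cast at this; linarith
  have hknn : (0:ℝ) ≤ k := Nat.cast_nonneg k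
  rw [hj1, abs_of_nonneg (by linarith : (0:ℝ) ≤ (j:ℝ) - k),
      abs_of_nonneg (by linarith : (0:ℝ) ≤ (j:ℝ) - 1 - (k:ℝ)),
      abs_of_nonneg (by linarith : (0:ℝ) ≤ (j:ℝ) - ((k - 1 : ℕ) : ℝ))]
  have key : c * k * ((k:ℝ) - ((k - 1 : ℕ) : ℝ)) ≤ c * k * 1 :=
    mul_le_mul_of_nonneg_left (by linarith) (mul_nonneg hc hknn)
  nlinarith [key]

lemma down_pair (c : ℝ) (hc : 0 ≤ c) (j k : ℕ) (h : j ≠ k) :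
    c * j * (|((j - 1 : ℕ) : ℝ) - k| - |(j:ℝ) - k|)
      + c * k * (|(j:ℝ) - ((k - 1 : ℕ) : ℝ)| - |(j:ℝ) - k|)
      ≤ -(c * |(j:ℝ) - k|) := by
  rcases lt_or_gt_of_ne h with hlt | hgt
  · have := down_core c hc k j hlt
    rw [abs_sub_comm ((k:ℝ)) ((j:ℝ))] at this
    rw [abs_sub_comm (((k-1:ℕ)):ℝ) ((j:ℝ))] at this
    rw [abs_sub_comm ((k:ℝ)) (((j-1:ℕ)):ℝ)] at this
    linarith
  · exact down_core c hc j k hgt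

lemma thRate_up1 (a b g d m v : ℝ) (n : ℕ) (x1 x2 : ℕ) :
    thRate a b g d m v n (x1, x2) (x1 + 1, x2) = a * x2 + m * n := by
  simp [thRate]

lemma thRate_up2 (a b g d m v : ℝ) (n : ℕ) (x1 x2 : ℕ) :
    thRate a b g d m v n (x1, x2) (x1, x2 + 1) = b * x1 + v * n := by
  have h1 : ((x1, x2 + 1) : ℕ × ℕ) ≠ (x1 + 1, x2) := by
    rw [ne_eq, Prod.mk.injEq]; omega
  simp [thRate, h1]

lemma thRate_down1 (a b g d m v : ℝ) (n : ℕ) (x1 x2 : ℕ) :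
    thRate a b g d m v n (x1, x2) (x1 - 1, x2) = g * x1 := by
  have h1 : ((x1 - 1, x2) : ℕ × ℕ) ≠ (x1 + 1, x2) := by
    rw [ne_eq, Prod.mk.injEq]; omega
  have h2 : ((x1 - 1, x2) : ℕ × ℕ) ≠ (x1, x2 + 1) := by
    rw [ne_eq, Prod.mk.injEq]; omega
  rcases Nat.eq_zero_or_pos x1 with h | h
  · subst h
    have h4 : ¬(x2 ≠ 0 ∧ ((0 - 1, x2) : ℕ × ℕ) = (0, x2 - 1)) := by
      rw [Prod.mk.injEq]; omega
    simp [thRate, h1, h2, h4]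
    intro hx hx'; exact absurd hx' (by omega)
  · have h3 : (x1 ≠ 0 ∧ ((x1 - 1, x2) : ℕ × ℕ) = (x1 - 1, x2)) := ⟨by omega, rfl⟩
    simp [thRate, h1, h2, h3]

lemma thRate_down2 (a b g d m v : ℝ) (n : ℕ) (x1 x2 : ℕ) :
    thRate a b g d m v n (x1, x2) (x1, x2 - 1) = d * x2 := by
  have h1 : ((x1, x2 - 1) : ℕ × ℕ) ≠ (x1 + 1, x2) := by
    rw [ne_eq, Prod.mk.injEq]; omega
  rcases Nat.eq_zero_or_pos x2 with h | h
  · subst h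
    have h2 : ((x1, (0:ℕ) - 1) : ℕ × ℕ) ≠ (x1, 0 + 1) := by
      rw [ne_eq, Prod.mk.injEq]; omega
    have h3 : ¬(x1 ≠ 0 ∧ ((x1, (0:ℕ) - 1) : ℕ × ℕ) = (x1 - 1, 0)) := by
      rw [Prod.mk.injEq]; omega
    simp [thRate, h1, h2, h3]
    intro hx hx'; exact absurd hx' (by omega)
  · have h2 : ((x1, x2 - 1) : ℕ × ℕ) ≠ (x1, x2 + 1) := by
      rw [ne_eq, Prod.mk.injEq]; omega
    have h3 : ¬(x1 ≠ 0 ∧ ((x1, x2 - 1) : ℕ × ℕ) = (x1 - 1, x2)) := by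
      rw [Prod.mk.injEq]; omega
    have h4 : (x2 ≠ 0 ∧ ((x1, x2 - 1) : ℕ × ℕ) = (x1, x2 - 1)) := ⟨by omega, rfl⟩
    simp [thRate, h1, h2, h3, h4]
    intro hx hx' hx''; exact absurd hx' (by omega)

/-- Proposition `coupling`: the coupling of two copies of the two-host chain is
contractive with constant `ρ` for the metric `d(x,y) = ‖x - y‖_θ`:  the generator `𝒜̂`
of the coupled chain satisfies `(𝒜̂ d)(u,v) ≤ -ρ d(u,v)` for all `u, v ∈ ℤ₊²`. -/
theorem stmt18 (a b g d m v : ℝ)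
    (ha : 0 < a) (hb : 0 < b) (hg : 0 < g) (hd : 0 < d) (hm : 0 < m) (hv : 0 < v)
    (hR : a * b / (g * d) < 1)
    (θ ρ : ℝ) (hθ1 : a / d < θ) (hθ2 : θ < g / b)
    (hρ1 : d - a / θ = ρ) (hρ2 : g - b * θ = ρ)
    (n : ℕ) (u w : ℕ × ℕ) :
    (∑' q : (ℕ × ℕ) × (ℕ × ℕ),
        coupQ a b g d m v n u w q * (dTheta θ q.1 q.2 - dTheta θ u w))
      ≤ -ρ * dTheta θ u w := by
  classical
  obtain ⟨u1, u2⟩ := u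
  obtain ⟨w1, w2⟩ := w
  have hθ0 : 0 < θ := lt_trans (div_pos ha hd) hθ1
  have k1 : θ * b - g = -ρ := by linarith
  have k2 : a - θ * d = -(θ * ρ) := by
    have h' : a / θ = d - ρ := by linarith
    have h'' : a = (d - ρ) * θ := by rw [← h', div_mul_cancel₀ _ (ne_of_gt hθ0)]
    nlinarith [h'']
  rcases eq_or_ne u1 w1 with h1 | h1 <;> rcases eq_or_ne u2 w2 with h2 | h2
  · -- u1 = w1, u2 = w2
    subst h1; subst h2
    have dt1 : decide (u1 = u1) = true := by simp
    have dtT : (decide True) = true := rfl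
    have dt2 : decide (u2 = u2) = true := by simp
    have e : (fun q : (ℕ × ℕ) × (ℕ × ℕ) => coupQ a b g d m v n (u1, u2) (u1, u2) q *
          (dTheta θ q.1 q.2 - dTheta θ (u1, u2) (u1, u2)))
        = fun q => (if q = ((u1 + 1, u2), (u1 + 1, u2)) then (a * (u2:ℝ) + m * (n:ℝ)) else 0) * (dTheta θ q.1 q.2 - dTheta θ (u1, u2) (u1, u2))
        + (if q = ((u1, u2 + 1), (u1, u2 + 1)) then (b * (u1:ℝ) + v * (n:ℝ)) else 0) * (dTheta θ q.1 q.2 - dTheta θ (u1, u2) (u1, u2))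
        + (if q = ((u1 - 1, u2), (u1 - 1, u2)) then (g * (u1:ℝ)) else 0) * (dTheta θ q.1 q.2 - dTheta θ (u1, u2) (u1, u2))
        + (if q = ((u1, u2 - 1), (u1, u2 - 1)) then (d * (u2:ℝ)) else 0) * (dTheta θ q.1 q.2 - dTheta θ (u1, u2) (u1, u2)) := by
      funext q
      simp only [coupQ, thRate_up1, thRate_up2, thRate_down1, thRate_down2,
        dt1, dt2, dtT, eq_self_iff_true, if_true, sub_self, max_self, ite_self, min_self,
        add_zero, zero_add]
      ring
    have H : HasSum (fun q : (ℕ × ℕ) × (ℕ × ℕ) => (if q = ((u1 + 1, u2), (u1 + 1, u2)) then (a * (u2:ℝ) + m * (n:ℝ)) else 0) * (dTheta θ q.1 q.2 - dTheta θ (u1, u2) (u1, u2))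
        + (if q = ((u1, u2 + 1), (u1, u2 + 1)) then (b * (u1:ℝ) + v * (n:ℝ)) else 0) * (dTheta θ q.1 q.2 - dTheta θ (u1, u2) (u1, u2))
        + (if q = ((u1 - 1, u2), (u1 - 1, u2)) then (g * (u1:ℝ)) else 0) * (dTheta θ q.1 q.2 - dTheta θ (u1, u2) (u1, u2))
        + (if q = ((u1, u2 - 1), (u1, u2 - 1)) then (d * (u2:ℝ)) else 0) * (dTheta θ q.1 q.2 - dTheta θ (u1, u2) (u1, u2)))
        ((a * (u2:ℝ) + m * (n:ℝ)) * (dTheta θ (u1 + 1, u2) (u1 + 1, u2) - dTheta θ (u1, u2) (u1, u2))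
      + (b * (u1:ℝ) + v * (n:ℝ)) * (dTheta θ (u1, u2 + 1) (u1, u2 + 1) - dTheta θ (u1, u2) (u1, u2))
      + (g * (u1:ℝ)) * (dTheta θ (u1 - 1, u2) (u1 - 1, u2) - dTheta θ (u1, u2) (u1, u2))
      + (d * (u2:ℝ)) * (dTheta θ (u1, u2 - 1) (u1, u2 - 1) - dTheta θ (u1, u2) (u1, u2))) :=
      ((((hasSum_single_mul _ _ _).add (hasSum_single_mul _ _ _)).add (hasSum_single_mul _ _ _)).add (hasSum_single_mul _ _ _))
    rw [e, H.tsum_eq]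
    have hS : ((a * (u2:ℝ) + m * (n:ℝ)) * (dTheta θ (u1 + 1, u2) (u1 + 1, u2) - dTheta θ (u1, u2) (u1, u2))
      + (b * (u1:ℝ) + v * (n:ℝ)) * (dTheta θ (u1, u2 + 1) (u1, u2 + 1) - dTheta θ (u1, u2) (u1, u2))
      + (g * (u1:ℝ)) * (dTheta θ (u1 - 1, u2) (u1 - 1, u2) - dTheta θ (u1, u2) (u1, u2))
      + (d * (u2:ℝ)) * (dTheta θ (u1, u2 - 1) (u1, u2 - 1) - dTheta θ (u1, u2) (u1, u2))) = 0 := by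
      simp only [dTheta]
      push_cast
      simp only [sub_self, abs_zero]
      ring
    rw [hS]
    have hgoal : dTheta θ (u1, u2) (u1, u2) = 0 := by simp [dTheta]
    rw [hgoal]
    simp
  · -- u1 = w1, u2 ≠ w2
    subst h1
    have dt1 : decide (u1 = u1) = true := by simp
    have dtT : (decide True) = true := rfl
    have e : (fun q : (ℕ × ℕ) × (ℕ × ℕ) => coupQ a b g d m v n (u1, u2) (u1, w2) q *
          (dTheta θ q.1 q.2 - dTheta θ (u1, u2) (u1, w2)))
        = fun q => (if q = ((u1 + 1, u2), (u1 + 1, w2)) then (min (a * (u2:ℝ) + m * (n:ℝ)) (a * (w2:ℝ) + m * (n:ℝ))) else 0) * (dTheta θ q.1 q.2 - dTheta θ (u1, u2) (u1, w2))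
        + (if q = ((u1 + 1, u2), (u1, w2)) then (max 0 (a * (u2:ℝ) + m * (n:ℝ) - (a * (w2:ℝ) + m * (n:ℝ)))) else 0) * (dTheta θ q.1 q.2 - dTheta θ (u1, u2) (u1, w2))
        + (if q = ((u1, u2), (u1 + 1, w2)) then (max 0 (a * (w2:ℝ) + m * (n:ℝ) - (a * (u2:ℝ) + m * (n:ℝ)))) else 0) * (dTheta θ q.1 q.2 - dTheta θ (u1, u2) (u1, w2))
        + (if q = ((u1, u2 + 1), (u1, w2)) then (b * (u1:ℝ) + v * (n:ℝ)) else 0) * (dTheta θ q.1 q.2 - dTheta θ (u1, u2) (u1, w2))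
        + (if q = ((u1, u2), (u1, w2 + 1)) then (b * (u1:ℝ) + v * (n:ℝ)) else 0) * (dTheta θ q.1 q.2 - dTheta θ (u1, u2) (u1, w2))
        + (if q = ((u1 - 1, u2), (u1 - 1, w2)) then (g * (u1:ℝ)) else 0) * (dTheta θ q.1 q.2 - dTheta θ (u1, u2) (u1, w2))
        + (if q = ((u1, u2 - 1), (u1, w2)) then (d * (u2:ℝ)) else 0) * (dTheta θ q.1 q.2 - dTheta θ (u1, u2) (u1, w2))
        + (if q = ((u1, u2), (u1, w2 - 1)) then (d * (w2:ℝ)) else 0) * (dTheta θ q.1 q.2 - dTheta θ (u1, u2) (u1, w2)) := by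
      funext q
      simp only [coupQ, thRate_up1, thRate_up2, thRate_down1, thRate_down2,
        dt1, dtT, eq_self_iff_true, if_true, decide_eq_false h2, Bool.false_eq_true, if_false,
        sub_self, max_self, ite_self, min_self, add_zero, zero_add]
      ring
    have H : HasSum (fun q : (ℕ × ℕ) × (ℕ × ℕ) => (if q = ((u1 + 1, u2), (u1 + 1, w2)) then (min (a * (u2:ℝ) + m * (n:ℝ)) (a * (w2:ℝ) + m * (n:ℝ))) else 0) * (dTheta θ q.1 q.2 - dTheta θ (u1, u2) (u1, w2))
        + (if q = ((u1 + 1, u2), (u1, w2)) then (max 0 (a * (u2:ℝ) + m * (n:ℝ) - (a * (w2:ℝ) + m * (n:ℝ)))) else 0) * (dTheta θ q.1 q.2 - dTheta θ (u1, u2) (u1, w2))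
        + (if q = ((u1, u2), (u1 + 1, w2)) then (max 0 (a * (w2:ℝ) + m * (n:ℝ) - (a * (u2:ℝ) + m * (n:ℝ)))) else 0) * (dTheta θ q.1 q.2 - dTheta θ (u1, u2) (u1, w2))
        + (if q = ((u1, u2 + 1), (u1, w2)) then (b * (u1:ℝ) + v * (n:ℝ)) else 0) * (dTheta θ q.1 q.2 - dTheta θ (u1, u2) (u1, w2))
        + (if q = ((u1, u2), (u1, w2 + 1)) then (b * (u1:ℝ) + v * (n:ℝ)) else 0) * (dTheta θ q.1 q.2 - dTheta θ (u1, u2) (u1, w2))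
        + (if q = ((u1 - 1, u2), (u1 - 1, w2)) then (g * (u1:ℝ)) else 0) * (dTheta θ q.1 q.2 - dTheta θ (u1, u2) (u1, w2))
        + (if q = ((u1, u2 - 1), (u1, w2)) then (d * (u2:ℝ)) else 0) * (dTheta θ q.1 q.2 - dTheta θ (u1, u2) (u1, w2))
        + (if q = ((u1, u2), (u1, w2 - 1)) then (d * (w2:ℝ)) else 0) * (dTheta θ q.1 q.2 - dTheta θ (u1, u2) (u1, w2)))
        ((min (a * (u2:ℝ) + m * (n:ℝ)) (a * (w2:ℝ) + m * (n:ℝ))) * (dTheta θ (u1 + 1, u2) (u1 + 1, w2) - dTheta θ (u1, u2) (u1, w2))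
      + (max 0 (a * (u2:ℝ) + m * (n:ℝ) - (a * (w2:ℝ) + m * (n:ℝ)))) * (dTheta θ (u1 + 1, u2) (u1, w2) - dTheta θ (u1, u2) (u1, w2))
      + (max 0 (a * (w2:ℝ) + m * (n:ℝ) - (a * (u2:ℝ) + m * (n:ℝ)))) * (dTheta θ (u1, u2) (u1 + 1, w2) - dTheta θ (u1, u2) (u1, w2))
      + (b * (u1:ℝ) + v * (n:ℝ)) * (dTheta θ (u1, u2 + 1) (u1, w2) - dTheta θ (u1, u2) (u1, w2))
      + (b * (u1:ℝ) + v * (n:ℝ)) * (dTheta θ (u1, u2) (u1, w2 + 1) - dTheta θ (u1, u2) (u1, w2))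
      + (g * (u1:ℝ)) * (dTheta θ (u1 - 1, u2) (u1 - 1, w2) - dTheta θ (u1, u2) (u1, w2))
      + (d * (u2:ℝ)) * (dTheta θ (u1, u2 - 1) (u1, w2) - dTheta θ (u1, u2) (u1, w2))
      + (d * (w2:ℝ)) * (dTheta θ (u1, u2) (u1, w2 - 1) - dTheta θ (u1, u2) (u1, w2))) :=
      ((((((((hasSum_single_mul _ _ _).add (hasSum_single_mul _ _ _)).add (hasSum_single_mul _ _ _)).add (hasSum_single_mul _ _ _)).add (hasSum_single_mul _ _ _)).add (hasSum_single_mul _ _ _)).add (hasSum_single_mul _ _ _)).add (hasSum_single_mul _ _ _))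
    rw [e, H.tsum_eq]
    have hS : ((min (a * (u2:ℝ) + m * (n:ℝ)) (a * (w2:ℝ) + m * (n:ℝ))) * (dTheta θ (u1 + 1, u2) (u1 + 1, w2) - dTheta θ (u1, u2) (u1, w2))
      + (max 0 (a * (u2:ℝ) + m * (n:ℝ) - (a * (w2:ℝ) + m * (n:ℝ)))) * (dTheta θ (u1 + 1, u2) (u1, w2) - dTheta θ (u1, u2) (u1, w2))
      + (max 0 (a * (w2:ℝ) + m * (n:ℝ) - (a * (u2:ℝ) + m * (n:ℝ)))) * (dTheta θ (u1, u2) (u1 + 1, w2) - dTheta θ (u1, u2) (u1, w2))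
      + (b * (u1:ℝ) + v * (n:ℝ)) * (dTheta θ (u1, u2 + 1) (u1, w2) - dTheta θ (u1, u2) (u1, w2))
      + (b * (u1:ℝ) + v * (n:ℝ)) * (dTheta θ (u1, u2) (u1, w2 + 1) - dTheta θ (u1, u2) (u1, w2))
      + (g * (u1:ℝ)) * (dTheta θ (u1 - 1, u2) (u1 - 1, w2) - dTheta θ (u1, u2) (u1, w2))
      + (d * (u2:ℝ)) * (dTheta θ (u1, u2 - 1) (u1, w2) - dTheta θ (u1, u2) (u1, w2))
      + (d * (w2:ℝ)) * (dTheta θ (u1, u2) (u1, w2 - 1) - dTheta θ (u1, u2) (u1, w2)))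
        = (max 0 ((a * (u2:ℝ) + m * (n:ℝ)) - (a * (w2:ℝ) + m * (n:ℝ))) + max 0 ((a * (w2:ℝ) + m * (n:ℝ)) - (a * (u2:ℝ) + m * (n:ℝ))))
          + θ * ((b * (u1:ℝ) + v * (n:ℝ)) * (|(u2:ℝ) + 1 - (w2:ℝ)| - |(u2:ℝ) - (w2:ℝ)|)
            + (b * (u1:ℝ) + v * (n:ℝ)) * (|(u2:ℝ) - ((w2:ℝ) + 1)| - |(u2:ℝ) - (w2:ℝ)|))
          + θ * (d * (u2:ℝ) * (|((u2 - 1 : ℕ):ℝ) - (w2:ℝ)| - |(u2:ℝ) - (w2:ℝ)|)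
            + d * (w2:ℝ) * (|(u2:ℝ) - ((w2 - 1 : ℕ):ℝ)| - |(u2:ℝ) - (w2:ℝ)|)) := by
      simp only [dTheta]
      push_cast
      simp only [sub_self, abs_zero, add_sub_cancel_left, sub_add_cancel_left, abs_neg, abs_one]
      ring
    rw [hS]
    have hgoal : dTheta θ (u1, u2) (u1, w2) = θ * |(u2:ℝ) - (w2:ℝ)| := by simp [dTheta]
    rw [hgoal]
    have TB1 : max 0 ((a * (u2:ℝ) + m * (n:ℝ)) - (a * (w2:ℝ) + m * (n:ℝ))) + max 0 ((a * (w2:ℝ) + m * (n:ℝ)) - (a * (u2:ℝ) + m * (n:ℝ))) = a * |(u2:ℝ) - (w2:ℝ)| := by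
      rw [max_pair, show (a * (u2:ℝ) + m * (n:ℝ)) - (a * (w2:ℝ) + m * (n:ℝ)) = a * ((u2:ℝ) - (w2:ℝ)) by ring, abs_mul, abs_of_pos ha]
    have TB2 : θ * ((b * (u1:ℝ) + v * (n:ℝ)) * (|(u2:ℝ) + 1 - (w2:ℝ)| - |(u2:ℝ) - (w2:ℝ)|)
          + (b * (u1:ℝ) + v * (n:ℝ)) * (|(u2:ℝ) - ((w2:ℝ) + 1)| - |(u2:ℝ) - (w2:ℝ)|)) ≤ θ * 0 :=
      mul_le_mul_of_nonneg_left ((up_pair (b * (u1:ℝ) + v * (n:ℝ)) (b * (u1:ℝ) + v * (n:ℝ)) u2 w2 h2).trans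
        (le_of_eq (by rw [sub_self, abs_zero]))) hθ0.le
    have TB4 : θ * (d * (u2:ℝ) * (|((u2 - 1 : ℕ):ℝ) - (w2:ℝ)| - |(u2:ℝ) - (w2:ℝ)|)
          + d * (w2:ℝ) * (|(u2:ℝ) - ((w2 - 1 : ℕ):ℝ)| - |(u2:ℝ) - (w2:ℝ)|)) ≤ θ * (-(d * |(u2:ℝ) - (w2:ℝ)|)) :=
      mul_le_mul_of_nonneg_left (down_pair d hd.le u2 w2 h2) hθ0.le
    have K2 : (a - θ * d) * |(u2:ℝ) - (w2:ℝ)| = -(θ * ρ) * |(u2:ℝ) - (w2:ℝ)| := by rw [k2]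
    linarith [TB1, TB2, TB4, K2]
  · -- u1 ≠ w1, u2 = w2
    subst h2
    have dt2 : decide (u2 = u2) = true := by simp
    have dtT : (decide True) = true := rfl
    have e : (fun q : (ℕ × ℕ) × (ℕ × ℕ) => coupQ a b g d m v n (u1, u2) (w1, u2) q *
          (dTheta θ q.1 q.2 - dTheta θ (u1, u2) (w1, u2)))
        = fun q => (if q = ((u1 + 1, u2), (w1, u2)) then (a * (u2:ℝ) + m * (n:ℝ)) else 0) * (dTheta θ q.1 q.2 - dTheta θ (u1, u2) (w1, u2))
        + (if q = ((u1, u2), (w1 + 1, u2)) then (a * (u2:ℝ) + m * (n:ℝ)) else 0) * (dTheta θ q.1 q.2 - dTheta θ (u1, u2) (w1, u2))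
        + (if q = ((u1, u2 + 1), (w1, u2 + 1)) then (min (b * (u1:ℝ) + v * (n:ℝ)) (b * (w1:ℝ) + v * (n:ℝ))) else 0) * (dTheta θ q.1 q.2 - dTheta θ (u1, u2) (w1, u2))
        + (if q = ((u1, u2 + 1), (w1, u2)) then (max 0 (b * (u1:ℝ) + v * (n:ℝ) - (b * (w1:ℝ) + v * (n:ℝ)))) else 0) * (dTheta θ q.1 q.2 - dTheta θ (u1, u2) (w1, u2))
        + (if q = ((u1, u2), (w1, u2 + 1)) then (max 0 (b * (w1:ℝ) + v * (n:ℝ) - (b * (u1:ℝ) + v * (n:ℝ)))) else 0) * (dTheta θ q.1 q.2 - dTheta θ (u1, u2) (w1, u2))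
        + (if q = ((u1 - 1, u2), (w1, u2)) then (g * (u1:ℝ)) else 0) * (dTheta θ q.1 q.2 - dTheta θ (u1, u2) (w1, u2))
        + (if q = ((u1, u2), (w1 - 1, u2)) then (g * (w1:ℝ)) else 0) * (dTheta θ q.1 q.2 - dTheta θ (u1, u2) (w1, u2))
        + (if q = ((u1, u2 - 1), (w1, u2 - 1)) then (d * (u2:ℝ)) else 0) * (dTheta θ q.1 q.2 - dTheta θ (u1, u2) (w1, u2)) := by
      funext q
      simp only [coupQ, thRate_up1, thRate_up2, thRate_down1, thRate_down2,
        dt2, dtT, eq_self_iff_true, if_true, decide_eq_false h1, Bool.false_eq_true, if_false,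
        sub_self, max_self, ite_self, min_self, add_zero, zero_add]
      ring
    have H : HasSum (fun q : (ℕ × ℕ) × (ℕ × ℕ) => (if q = ((u1 + 1, u2), (w1, u2)) then (a * (u2:ℝ) + m * (n:ℝ)) else 0) * (dTheta θ q.1 q.2 - dTheta θ (u1, u2) (w1, u2))
        + (if q = ((u1, u2), (w1 + 1, u2)) then (a * (u2:ℝ) + m * (n:ℝ)) else 0) * (dTheta θ q.1 q.2 - dTheta θ (u1, u2) (w1, u2))
        + (if q = ((u1, u2 + 1), (w1, u2 + 1)) then (min (b * (u1:ℝ) + v * (n:ℝ)) (b * (w1:ℝ) + v * (n:ℝ))) else 0) * (dTheta θ q.1 q.2 - dTheta θ (u1, u2) (w1, u2))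
        + (if q = ((u1, u2 + 1), (w1, u2)) then (max 0 (b * (u1:ℝ) + v * (n:ℝ) - (b * (w1:ℝ) + v * (n:ℝ)))) else 0) * (dTheta θ q.1 q.2 - dTheta θ (u1, u2) (w1, u2))
        + (if q = ((u1, u2), (w1, u2 + 1)) then (max 0 (b * (w1:ℝ) + v * (n:ℝ) - (b * (u1:ℝ) + v * (n:ℝ)))) else 0) * (dTheta θ q.1 q.2 - dTheta θ (u1, u2) (w1, u2))
        + (if q = ((u1 - 1, u2), (w1, u2)) then (g * (u1:ℝ)) else 0) * (dTheta θ q.1 q.2 - dTheta θ (u1, u2) (w1, u2))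
        + (if q = ((u1, u2), (w1 - 1, u2)) then (g * (w1:ℝ)) else 0) * (dTheta θ q.1 q.2 - dTheta θ (u1, u2) (w1, u2))
        + (if q = ((u1, u2 - 1), (w1, u2 - 1)) then (d * (u2:ℝ)) else 0) * (dTheta θ q.1 q.2 - dTheta θ (u1, u2) (w1, u2)))
        ((a * (u2:ℝ) + m * (n:ℝ)) * (dTheta θ (u1 + 1, u2) (w1, u2) - dTheta θ (u1, u2) (w1, u2))
      + (a * (u2:ℝ) + m * (n:ℝ)) * (dTheta θ (u1, u2) (w1 + 1, u2) - dTheta θ (u1, u2) (w1, u2))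
      + (min (b * (u1:ℝ) + v * (n:ℝ)) (b * (w1:ℝ) + v * (n:ℝ))) * (dTheta θ (u1, u2 + 1) (w1, u2 + 1) - dTheta θ (u1, u2) (w1, u2))
      + (max 0 (b * (u1:ℝ) + v * (n:ℝ) - (b * (w1:ℝ) + v * (n:ℝ)))) * (dTheta θ (u1, u2 + 1) (w1, u2) - dTheta θ (u1, u2) (w1, u2))
      + (max 0 (b * (w1:ℝ) + v * (n:ℝ) - (b * (u1:ℝ) + v * (n:ℝ)))) * (dTheta θ (u1, u2) (w1, u2 + 1) - dTheta θ (u1, u2) (w1, u2))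
      + (g * (u1:ℝ)) * (dTheta θ (u1 - 1, u2) (w1, u2) - dTheta θ (u1, u2) (w1, u2))
      + (g * (w1:ℝ)) * (dTheta θ (u1, u2) (w1 - 1, u2) - dTheta θ (u1, u2) (w1, u2))
      + (d * (u2:ℝ)) * (dTheta θ (u1, u2 - 1) (w1, u2 - 1) - dTheta θ (u1, u2) (w1, u2))) :=
      ((((((((hasSum_single_mul _ _ _).add (hasSum_single_mul _ _ _)).add (hasSum_single_mul _ _ _)).add (hasSum_single_mul _ _ _)).add (hasSum_single_mul _ _ _)).add (hasSum_single_mul _ _ _)).add (hasSum_single_mul _ _ _)).add (hasSum_single_mul _ _ _))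
    rw [e, H.tsum_eq]
    have hS : ((a * (u2:ℝ) + m * (n:ℝ)) * (dTheta θ (u1 + 1, u2) (w1, u2) - dTheta θ (u1, u2) (w1, u2))
      + (a * (u2:ℝ) + m * (n:ℝ)) * (dTheta θ (u1, u2) (w1 + 1, u2) - dTheta θ (u1, u2) (w1, u2))
      + (min (b * (u1:ℝ) + v * (n:ℝ)) (b * (w1:ℝ) + v * (n:ℝ))) * (dTheta θ (u1, u2 + 1) (w1, u2 + 1) - dTheta θ (u1, u2) (w1, u2))
      + (max 0 (b * (u1:ℝ) + v * (n:ℝ) - (b * (w1:ℝ) + v * (n:ℝ)))) * (dTheta θ (u1, u2 + 1) (w1, u2) - dTheta θ (u1, u2) (w1, u2))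
      + (max 0 (b * (w1:ℝ) + v * (n:ℝ) - (b * (u1:ℝ) + v * (n:ℝ)))) * (dTheta θ (u1, u2) (w1, u2 + 1) - dTheta θ (u1, u2) (w1, u2))
      + (g * (u1:ℝ)) * (dTheta θ (u1 - 1, u2) (w1, u2) - dTheta θ (u1, u2) (w1, u2))
      + (g * (w1:ℝ)) * (dTheta θ (u1, u2) (w1 - 1, u2) - dTheta θ (u1, u2) (w1, u2))
      + (d * (u2:ℝ)) * (dTheta θ (u1, u2 - 1) (w1, u2 - 1) - dTheta θ (u1, u2) (w1, u2)))
        = ((a * (u2:ℝ) + m * (n:ℝ)) * (|(u1:ℝ) + 1 - (w1:ℝ)| - |(u1:ℝ) - (w1:ℝ)|)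
            + (a * (u2:ℝ) + m * (n:ℝ)) * (|(u1:ℝ) - ((w1:ℝ) + 1)| - |(u1:ℝ) - (w1:ℝ)|))
          + θ * (max 0 ((b * (u1:ℝ) + v * (n:ℝ)) - (b * (w1:ℝ) + v * (n:ℝ))) + max 0 ((b * (w1:ℝ) + v * (n:ℝ)) - (b * (u1:ℝ) + v * (n:ℝ))))
          + (g * (u1:ℝ) * (|((u1 - 1 : ℕ):ℝ) - (w1:ℝ)| - |(u1:ℝ) - (w1:ℝ)|)
            + g * (w1:ℝ) * (|(u1:ℝ) - ((w1 - 1 : ℕ):ℝ)| - |(u1:ℝ) - (w1:ℝ)|)) := by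
      simp only [dTheta]
      push_cast
      simp only [sub_self, abs_zero, add_sub_cancel_left, sub_add_cancel_left, abs_neg, abs_one]
      ring
    rw [hS]
    have hgoal : dTheta θ (u1, u2) (w1, u2) = |(u1:ℝ) - (w1:ℝ)| := by simp [dTheta]
    rw [hgoal]
    have TC1 : (a * (u2:ℝ) + m * (n:ℝ)) * (|(u1:ℝ) + 1 - (w1:ℝ)| - |(u1:ℝ) - (w1:ℝ)|)
          + (a * (u2:ℝ) + m * (n:ℝ)) * (|(u1:ℝ) - ((w1:ℝ) + 1)| - |(u1:ℝ) - (w1:ℝ)|) ≤ 0 :=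
      (up_pair (a * (u2:ℝ) + m * (n:ℝ)) (a * (u2:ℝ) + m * (n:ℝ)) u1 w1 h1).trans
        (le_of_eq (by rw [sub_self, abs_zero]))
    have TC2 : max 0 ((b * (u1:ℝ) + v * (n:ℝ)) - (b * (w1:ℝ) + v * (n:ℝ))) + max 0 ((b * (w1:ℝ) + v * (n:ℝ)) - (b * (u1:ℝ) + v * (n:ℝ))) = b * |(u1:ℝ) - (w1:ℝ)| := by
      rw [max_pair, show (b * (u1:ℝ) + v * (n:ℝ)) - (b * (w1:ℝ) + v * (n:ℝ)) = b * ((u1:ℝ) - (w1:ℝ)) by ring, abs_mul, abs_of_pos hb]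
    have TC3 : g * (u1:ℝ) * (|((u1 - 1 : ℕ):ℝ) - (w1:ℝ)| - |(u1:ℝ) - (w1:ℝ)|)
          + g * (w1:ℝ) * (|(u1:ℝ) - ((w1 - 1 : ℕ):ℝ)| - |(u1:ℝ) - (w1:ℝ)|) ≤ -(g * |(u1:ℝ) - (w1:ℝ)|) :=
      down_pair g hg.le u1 w1 h1
    have TC2' : θ * (max 0 ((b * (u1:ℝ) + v * (n:ℝ)) - (b * (w1:ℝ) + v * (n:ℝ)))
          + max 0 ((b * (w1:ℝ) + v * (n:ℝ)) - (b * (u1:ℝ) + v * (n:ℝ))))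
        = θ * (b * |(u1:ℝ) - (w1:ℝ)|) := by rw [TC2]
    have K1 : (θ * b - g) * |(u1:ℝ) - (w1:ℝ)| = -ρ * |(u1:ℝ) - (w1:ℝ)| := by rw [k1]
    linarith [TC1, TC2', TC3, K1]
  · -- u1 ≠ w1, u2 ≠ w2
    have e : (fun q : (ℕ × ℕ) × (ℕ × ℕ) => coupQ a b g d m v n (u1, u2) (w1, w2) q *
          (dTheta θ q.1 q.2 - dTheta θ (u1, u2) (w1, w2)))
        = fun q => (if q = ((u1 + 1, u2), (w1, w2)) then (a * (u2:ℝ) + m * (n:ℝ)) else 0) * (dTheta θ q.1 q.2 - dTheta θ (u1, u2) (w1, w2))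
        + (if q = ((u1, u2), (w1 + 1, w2)) then (a * (w2:ℝ) + m * (n:ℝ)) else 0) * (dTheta θ q.1 q.2 - dTheta θ (u1, u2) (w1, w2))
        + (if q = ((u1, u2 + 1), (w1, w2)) then (b * (u1:ℝ) + v * (n:ℝ)) else 0) * (dTheta θ q.1 q.2 - dTheta θ (u1, u2) (w1, w2))
        + (if q = ((u1, u2), (w1, w2 + 1)) then (b * (w1:ℝ) + v * (n:ℝ)) else 0) * (dTheta θ q.1 q.2 - dTheta θ (u1, u2) (w1, w2))
        + (if q = ((u1 - 1, u2), (w1, w2)) then (g * (u1:ℝ)) else 0) * (dTheta θ q.1 q.2 - dTheta θ (u1, u2) (w1, w2))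
        + (if q = ((u1, u2), (w1 - 1, w2)) then (g * (w1:ℝ)) else 0) * (dTheta θ q.1 q.2 - dTheta θ (u1, u2) (w1, w2))
        + (if q = ((u1, u2 - 1), (w1, w2)) then (d * (u2:ℝ)) else 0) * (dTheta θ q.1 q.2 - dTheta θ (u1, u2) (w1, w2))
        + (if q = ((u1, u2), (w1, w2 - 1)) then (d * (w2:ℝ)) else 0) * (dTheta θ q.1 q.2 - dTheta θ (u1, u2) (w1, w2)) := by
      funext q
      simp only [coupQ, thRate_up1, thRate_up2, thRate_down1, thRate_down2,
        decide_eq_false h1, decide_eq_false h2, Bool.false_eq_true, if_false]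
      ring
    have H : HasSum (fun q : (ℕ × ℕ) × (ℕ × ℕ) => (if q = ((u1 + 1, u2), (w1, w2)) then (a * (u2:ℝ) + m * (n:ℝ)) else 0) * (dTheta θ q.1 q.2 - dTheta θ (u1, u2) (w1, w2))
        + (if q = ((u1, u2), (w1 + 1, w2)) then (a * (w2:ℝ) + m * (n:ℝ)) else 0) * (dTheta θ q.1 q.2 - dTheta θ (u1, u2) (w1, w2))
        + (if q = ((u1, u2 + 1), (w1, w2)) then (b * (u1:ℝ) + v * (n:ℝ)) else 0) * (dTheta θ q.1 q.2 - dTheta θ (u1, u2) (w1, w2))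
        + (if q = ((u1, u2), (w1, w2 + 1)) then (b * (w1:ℝ) + v * (n:ℝ)) else 0) * (dTheta θ q.1 q.2 - dTheta θ (u1, u2) (w1, w2))
        + (if q = ((u1 - 1, u2), (w1, w2)) then (g * (u1:ℝ)) else 0) * (dTheta θ q.1 q.2 - dTheta θ (u1, u2) (w1, w2))
        + (if q = ((u1, u2), (w1 - 1, w2)) then (g * (w1:ℝ)) else 0) * (dTheta θ q.1 q.2 - dTheta θ (u1, u2) (w1, w2))
        + (if q = ((u1, u2 - 1), (w1, w2)) then (d * (u2:ℝ)) else 0) * (dTheta θ q.1 q.2 - dTheta θ (u1, u2) (w1, w2))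
        + (if q = ((u1, u2), (w1, w2 - 1)) then (d * (w2:ℝ)) else 0) * (dTheta θ q.1 q.2 - dTheta θ (u1, u2) (w1, w2)))
        ((a * (u2:ℝ) + m * (n:ℝ)) * (dTheta θ (u1 + 1, u2) (w1, w2) - dTheta θ (u1, u2) (w1, w2))
      + (a * (w2:ℝ) + m * (n:ℝ)) * (dTheta θ (u1, u2) (w1 + 1, w2) - dTheta θ (u1, u2) (w1, w2))
      + (b * (u1:ℝ) + v * (n:ℝ)) * (dTheta θ (u1, u2 + 1) (w1, w2) - dTheta θ (u1, u2) (w1, w2))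
      + (b * (w1:ℝ) + v * (n:ℝ)) * (dTheta θ (u1, u2) (w1, w2 + 1) - dTheta θ (u1, u2) (w1, w2))
      + (g * (u1:ℝ)) * (dTheta θ (u1 - 1, u2) (w1, w2) - dTheta θ (u1, u2) (w1, w2))
      + (g * (w1:ℝ)) * (dTheta θ (u1, u2) (w1 - 1, w2) - dTheta θ (u1, u2) (w1, w2))
      + (d * (u2:ℝ)) * (dTheta θ (u1, u2 - 1) (w1, w2) - dTheta θ (u1, u2) (w1, w2))
      + (d * (w2:ℝ)) * (dTheta θ (u1, u2) (w1, w2 - 1) - dTheta θ (u1, u2) (w1, w2))) :=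
      ((((((((hasSum_single_mul _ _ _).add (hasSum_single_mul _ _ _)).add (hasSum_single_mul _ _ _)).add (hasSum_single_mul _ _ _)).add (hasSum_single_mul _ _ _)).add (hasSum_single_mul _ _ _)).add (hasSum_single_mul _ _ _)).add (hasSum_single_mul _ _ _))
    rw [e, H.tsum_eq]
    have hS : ((a * (u2:ℝ) + m * (n:ℝ)) * (dTheta θ (u1 + 1, u2) (w1, w2) - dTheta θ (u1, u2) (w1, w2))
      + (a * (w2:ℝ) + m * (n:ℝ)) * (dTheta θ (u1, u2) (w1 + 1, w2) - dTheta θ (u1, u2) (w1, w2))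
      + (b * (u1:ℝ) + v * (n:ℝ)) * (dTheta θ (u1, u2 + 1) (w1, w2) - dTheta θ (u1, u2) (w1, w2))
      + (b * (w1:ℝ) + v * (n:ℝ)) * (dTheta θ (u1, u2) (w1, w2 + 1) - dTheta θ (u1, u2) (w1, w2))
      + (g * (u1:ℝ)) * (dTheta θ (u1 - 1, u2) (w1, w2) - dTheta θ (u1, u2) (w1, w2))
      + (g * (w1:ℝ)) * (dTheta θ (u1, u2) (w1 - 1, w2) - dTheta θ (u1, u2) (w1, w2))
      + (d * (u2:ℝ)) * (dTheta θ (u1, u2 - 1) (w1, w2) - dTheta θ (u1, u2) (w1, w2))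
      + (d * (w2:ℝ)) * (dTheta θ (u1, u2) (w1, w2 - 1) - dTheta θ (u1, u2) (w1, w2)))
        = ((a * (u2:ℝ) + m * (n:ℝ)) * (|(u1:ℝ) + 1 - (w1:ℝ)| - |(u1:ℝ) - (w1:ℝ)|)
        + (a * (w2:ℝ) + m * (n:ℝ)) * (|(u1:ℝ) - ((w1:ℝ) + 1)| - |(u1:ℝ) - (w1:ℝ)|))
      + θ * ((b * (u1:ℝ) + v * (n:ℝ)) * (|(u2:ℝ) + 1 - (w2:ℝ)| - |(u2:ℝ) - (w2:ℝ)|)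
        + (b * (w1:ℝ) + v * (n:ℝ)) * (|(u2:ℝ) - ((w2:ℝ) + 1)| - |(u2:ℝ) - (w2:ℝ)|))
      + (g * (u1:ℝ) * (|((u1 - 1 : ℕ):ℝ) - (w1:ℝ)| - |(u1:ℝ) - (w1:ℝ)|)
        + g * (w1:ℝ) * (|(u1:ℝ) - ((w1 - 1 : ℕ):ℝ)| - |(u1:ℝ) - (w1:ℝ)|))
      + θ * (d * (u2:ℝ) * (|((u2 - 1 : ℕ):ℝ) - (w2:ℝ)| - |(u2:ℝ) - (w2:ℝ)|)
        + d * (w2:ℝ) * (|(u2:ℝ) - ((w2 - 1 : ℕ):ℝ)| - |(u2:ℝ) - (w2:ℝ)|)) := by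
      simp only [dTheta]
      push_cast
      ring
    rw [hS]
    have hgoal : dTheta θ (u1, u2) (w1, w2) = |(u1:ℝ) - (w1:ℝ)| + θ * |(u2:ℝ) - (w2:ℝ)| := by simp [dTheta]
    rw [hgoal]
    have T1 : (a * (u2:ℝ) + m * (n:ℝ)) * (|(u1:ℝ) + 1 - (w1:ℝ)| - |(u1:ℝ) - (w1:ℝ)|)
        + (a * (w2:ℝ) + m * (n:ℝ)) * (|(u1:ℝ) - ((w1:ℝ) + 1)| - |(u1:ℝ) - (w1:ℝ)|)
        ≤ a * |(u2:ℝ) - (w2:ℝ)| := by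
      refine le_trans (up_pair _ _ u1 w1 h1) (le_of_eq ?_)
      rw [show a * (u2:ℝ) + m * (n:ℝ) - (a * (w2:ℝ) + m * (n:ℝ)) = a * ((u2:ℝ) - (w2:ℝ)) by ring,
        abs_mul, abs_of_pos ha]
    have T2 : θ * ((b * (u1:ℝ) + v * (n:ℝ)) * (|(u2:ℝ) + 1 - (w2:ℝ)| - |(u2:ℝ) - (w2:ℝ)|)
        + (b * (w1:ℝ) + v * (n:ℝ)) * (|(u2:ℝ) - ((w2:ℝ) + 1)| - |(u2:ℝ) - (w2:ℝ)|))
        ≤ θ * (b * |(u1:ℝ) - (w1:ℝ)|) := by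
      refine mul_le_mul_of_nonneg_left (le_trans (up_pair _ _ u2 w2 h2) (le_of_eq ?_)) hθ0.le
      rw [show b * (u1:ℝ) + v * (n:ℝ) - (b * (w1:ℝ) + v * (n:ℝ)) = b * ((u1:ℝ) - (w1:ℝ)) by ring,
        abs_mul, abs_of_pos hb]
    have T3 : g * (u1:ℝ) * (|((u1 - 1 : ℕ):ℝ) - (w1:ℝ)| - |(u1:ℝ) - (w1:ℝ)|)
        + g * (w1:ℝ) * (|(u1:ℝ) - ((w1 - 1 : ℕ):ℝ)| - |(u1:ℝ) - (w1:ℝ)|)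
        ≤ -(g * |(u1:ℝ) - (w1:ℝ)|) := down_pair g hg.le u1 w1 h1
    have T4 : θ * (d * (u2:ℝ) * (|((u2 - 1 : ℕ):ℝ) - (w2:ℝ)| - |(u2:ℝ) - (w2:ℝ)|)
        + d * (w2:ℝ) * (|(u2:ℝ) - ((w2 - 1 : ℕ):ℝ)| - |(u2:ℝ) - (w2:ℝ)|))
        ≤ θ * (-(d * |(u2:ℝ) - (w2:ℝ)|)) :=
      mul_le_mul_of_nonneg_left (down_pair d hd.le u2 w2 h2) hθ0.le
    have K1 : (θ * b - g) * |(u1:ℝ) - (w1:ℝ)| = -ρ * |(u1:ℝ) - (w1:ℝ)| := by rw [k1]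
    have K2 : (a - θ * d) * |(u2:ℝ) - (w2:ℝ)| = -(θ * ρ) * |(u2:ℝ) - (w2:ℝ)| := by rw [k2]
    linarith [T1, T2, T3, T4, K1, K2]
end
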